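/- arXiv:1512.00982 — 6 statements merged into one kernel-verified Lean document; each statement's English description precedes it below -/
import Mathlib

section
/- For every integer N ≥ 1 and every Borel probability measure Λ₀ on [0,1] whose topological support is an infinite set, there exists an uncountable family 𝔉 of Borel probability measures on [0,1] such that every Λ ∈ 𝔉 satisfies ∫_{[0,1]} r^k Λ(dr) = ∫_{[0,1]} r^k Λ₀(dr) for all integers 1 ≤ k ≤ N, and any two distinct members Λ₁, Λ₂ ∈ 𝔉 are mutually singular (equivalently, their total variation distance equals 2). -/
/-!
Let `M ∈ ℝᴺ` be the moment vector `∫ (r, r², …, r^N) dΛ₀`. Any `N + 1` distinct points of the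
moment curve `r ↦ (r, …, r^N)` are affinely independent (Vandermonde), so a nonzero linear
functional is constant on only finitely many of its points. Since `Λ₀` has infinite support, `M`
cannot lie on a supporting hyperplane of the closed convex hull `K` of the curve over `[0,1]`,
hence `M ∈ interior K`. If `D` is dense, the curve over `[0,1] ∩ D` is dense in the curve, so its
convex hull has the same interior as `K`: `M` is a finite convex combination of curve points with
parameters in `D`, i.e. the moment vector of a probability measure concentrated on `D`. Running
this over the uncountably many cosets `t + ℚ`, which are dense and pairwise disjoint, gives
pairwise mutually singular measures with the moments of `Λ₀`.
-/

open MeasureTheory Set Function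
open scoped Pointwise

universe u

theorem LinearMap.eq_zero_of_eqOn_const_of_affineSpan_eq_top {k V W : Type*} [Ring k]
    [AddCommGroup V] [Module k V] [AddCommGroup W] [Module k W] {f : V →ₗ[k] W} {s : Set V}
    {c : W} (hs : affineSpan k s = ⊤) (hf : EqOn f (fun _ => c) s) : f = 0 := by
  have h := AffineMap.ext_on hs (f := f.toAffineMap) (g := AffineMap.const k V c) hf
  have hc : c = 0 := by simpa using (congrArg (· 0) h).symm
  ext x
  simpa [hc] using congrArg (· x) h

section Convex

variable {E : Type*} [NormedAddCommGroup E] [NormedSpace ℝ E]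

theorem Convex.exists_ne_zero_forall_le_of_notMem_interior {s : Set E} (hs : Convex ℝ s)
    (hs' : (interior s).Nonempty) {x : E} (hx : x ∉ interior s) :
    ∃ f : StrongDual ℝ E, f ≠ 0 ∧ ∀ a ∈ s, f a ≤ f x := by
  obtain ⟨f, hf⟩ := geometric_hahn_banach_open_point hs.interior isOpen_interior hx
  refine ⟨f, ?_, fun a ha => ?_⟩
  · rintro rfl
    obtain ⟨a, ha⟩ := hs'
    exact (hf a ha).false
  · have ha' : a ∈ closure (interior s) :=
      hs.closure_interior_eq_closure_of_nonempty_interior hs' ▸ subset_closure ha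
    exact closure_minimal (fun b hb => (hf b hb).le) (isClosed_le f.continuous continuous_const) ha'

theorem mem_convexHull_of_mem_interior_closure_convexHull [FiniteDimensional ℝ E] {s t : Set E}
    (hst : s ⊆ closure t) (ht : affineSpan ℝ t = ⊤) {x : E}
    (hx : x ∈ interior (closure (convexHull ℝ s))) : x ∈ convexHull ℝ t := by
  have hsub : closure (convexHull ℝ s) ⊆ closure (convexHull ℝ t) :=
    closure_minimal (convexHull_min (hst.trans (closure_mono (subset_convexHull ℝ t)))
      (convex_convexHull ℝ t).closure) isClosed_closure
  have hint := (convex_convexHull ℝ t).interior_closure_eq_interior_of_nonempty_interior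
    (interior_convexHull_nonempty_iff_affineSpan_eq_top.2 ht)
  exact interior_subset (hint ▸ interior_mono hsub hx)

end Convex

theorem MeasureTheory.Measure.eqOn_support_of_ae_eq {X Y : Type*} [TopologicalSpace X]
    [MeasurableSpace X] [TopologicalSpace Y] [T2Space Y] {μ : Measure X} {f g : X → Y}
    (hf : Continuous f) (hg : Continuous g) (h : f =ᵐ[μ] g) : EqOn f g μ.support := by
  intro x hx
  by_contra hne
  have hpos := (Measure.mem_support_iff_forall x).1 hx _ ((isOpen_ne_fun hf hg).mem_nhds hne)
  exact hpos.ne' (ae_iff.1 h)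

theorem integral_mem_interior_closure_convexHull {X E : Type*} [TopologicalSpace X]
    [MeasurableSpace X] [NormedAddCommGroup E] [NormedSpace ℝ E] [FiniteDimensional ℝ E]
    {μ : Measure X} [IsProbabilityMeasure μ] {g : X → E} (hg : Continuous g)
    (hgi : Integrable g μ) (hspan : affineSpan ℝ (g '' μ.support) = ⊤) :
    ∫ x, g x ∂μ ∈ interior (closure (convexHull ℝ (range g))) := by
  set M := ∫ x, g x ∂μ
  have hK : Convex ℝ (closure (convexHull ℝ (range g))) := (convex_convexHull ℝ _).closure
  have hint : (interior (closure (convexHull ℝ (range g)))).Nonempty :=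
    (interior_convexHull_nonempty_iff_affineSpan_eq_top.2 hspan).mono <| interior_mono <|
      (convexHull_mono (image_subset_range _ _)).trans subset_closure
  by_contra hM
  obtain ⟨f, hf0, hfK⟩ := hK.exists_ne_zero_forall_le_of_notMem_interior hint hM
  have hle : ∀ x, f (g x) ≤ f M := fun x =>
    hfK _ (subset_closure (subset_convexHull ℝ _ (mem_range_self x)))
  have hzero : ∫ x, (f M - f (g x)) ∂μ = 0 := by
    rw [integral_sub (integrable_const _) (f.integrable_comp hgi), integral_const,
      f.integral_comp_comm hgi]
    simp [M]
  have hae : (fun x => f (g x)) =ᵐ[μ] fun _ => f M := by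
    filter_upwards [(integral_eq_zero_iff_of_nonneg (fun x => sub_nonneg.2 (hle x))
      ((integrable_const _).sub (f.integrable_comp hgi))).1 hzero] with x hx
    exact (sub_eq_zero.1 hx).symm
  have heq := Measure.eqOn_support_of_ae_eq (f.continuous.comp hg) continuous_const hae
  refine hf0 (ContinuousLinearMap.coe_injective
    (LinearMap.eq_zero_of_eqOn_const_of_affineSpan_eq_top (c := f M) hspan ?_))
  rintro _ ⟨x, hx, rfl⟩
  exact heq hx

theorem exists_isProbabilityMeasure_integral_eq_of_mem_convexHull {X E : Type*}
    [MeasurableSpace X] [MeasurableSingletonClass X] [NormedAddCommGroup E] [NormedSpace ℝ E]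
    [CompleteSpace E] {g : X → E} {s : Set X} {y : E} (hy : y ∈ convexHull ℝ (g '' s)) :
    ∃ μ : Measure X, IsProbabilityMeasure μ ∧ μ sᶜ = 0 ∧ ∫ x, g x ∂μ = y := by
  obtain ⟨ι, _, w, z, hw₀, hw₁, hz, rfl⟩ := mem_convexHull_iff_exists_fintype.1 hy
  choose p hps hpz using hz
  refine ⟨∑ i, ENNReal.ofReal (w i) • Measure.dirac (p i), ⟨?_⟩, ?_, ?_⟩
  · simp [← ENNReal.ofReal_sum_of_nonneg fun i _ => hw₀ i, hw₁]
  · simp [hps]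
  · rw [integral_finsetSum_measure fun i _ =>
      (integrable_dirac enorm_lt_top).smul_measure ENNReal.ofReal_ne_top]
    simp [integral_smul_measure, ENNReal.toReal_ofReal (hw₀ _), hpz]

theorem QuotientAddGroup.preimage_mk_singleton_mk {G : Type*} [AddGroup G] (H : AddSubgroup G)
    (x : G) : QuotientAddGroup.mk ⁻¹' {(x : G ⧸ H)} = x +ᵥ (H : Set G) := by
  rw [← image_singleton, QuotientAddGroup.preimage_image_mk_eq_add, singleton_add]
  rfl

theorem AddSubgroup.exists_uncountable_pairwise_disjoint_countable_dense {G : Type u}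
    [AddCommGroup G] [TopologicalSpace G] [IsTopologicalAddGroup G] [Uncountable G]
    (H : AddSubgroup G) (hc : (H : Set G).Countable) (hd : Dense (H : Set G)) :
    ∃ (ι : Type u) (F : ι → Set G), Uncountable ι ∧ Pairwise (Disjoint on F) ∧
      ∀ i, (F i).Countable ∧ Dense (F i) := by
  have hfiber : ∀ c : G ⧸ H, (QuotientAddGroup.mk ⁻¹' {c}).Countable ∧
      Dense (QuotientAddGroup.mk ⁻¹' {c}) := by
    intro c
    induction c using QuotientAddGroup.induction_on with | H x => ?_
    rw [QuotientAddGroup.preimage_mk_singleton_mk]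
    exact ⟨hc.image _, hd.vadd x⟩
  refine ⟨G ⧸ H, fun c => QuotientAddGroup.mk ⁻¹' {c}, ?_, fun c d hcd => ?_, hfiber⟩
  · by_contra! hcount
    exact not_countable (Countable.of_preimage_singleton fun c => (hfiber c).1)
  · exact (disjoint_singleton.2 hcd).preimage _

noncomputable def momentCurve (N : ℕ) (x : ℝ) : Fin N → ℝ := fun k => x ^ ((k : ℕ) + 1)

theorem continuous_momentCurve (N : ℕ) : Continuous (momentCurve N) :=
  continuous_pi fun _ => continuous_pow _

theorem affineIndependent_momentCurve_comp {N : ℕ} {y : Fin (N + 1) → ℝ} (hy : Injective y) :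
    AffineIndependent ℝ (momentCurve N ∘ y) := by
  rw [affineIndependent_iff_of_fintype]
  intro w hw hvsub
  rw [Finset.weightedVSub_eq_linear_combination _ hw] at hvsub
  -- Row `0` of the Vandermonde system is `∑ w = 0`, row `k + 1` is coordinate `k` of `hvsub`.
  have hpow : ∀ j : Fin (N + 1), ∑ i, w i * y i ^ (j : ℕ) = 0 := by
    refine Fin.cases (by simpa using hw) fun k => ?_
    simpa [momentCurve] using congrFun hvsub k
  exact congrFun (Matrix.eq_zero_of_forall_pow_sum_mul_pow_eq_zero hy hpow)

theorem affineSpan_momentCurve_image {N : ℕ} {s : Set ℝ} (hs : s.Infinite) :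
    affineSpan ℝ (momentCurve N '' s) = ⊤ := by
  let y : Fin (N + 1) ↪ s := Fin.valEmbedding.trans hs.natEmbedding
  have hind : AffineIndependent ℝ (momentCurve N ∘ (↑) ∘ y) :=
    affineIndependent_momentCurve_comp (Subtype.val_injective.comp y.injective)
  have htop : affineSpan ℝ (range (momentCurve N ∘ (↑) ∘ y)) = ⊤ := by
    rw [hind.affineSpan_eq_top_iff_card_eq_finrank_add_one]
    simp
  refine eq_top_iff.2 (htop.ge.trans (affineSpan_mono ℝ ?_))
  rintro _ ⟨i, rfl⟩
  exact mem_image_of_mem _ (y i).2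

theorem integrable_momentCurve (N : ℕ) (μ : Measure (Icc (0 : ℝ) 1)) [IsFiniteMeasure μ] :
    Integrable (fun r : Icc (0 : ℝ) 1 => momentCurve N r) μ :=
  ((continuous_momentCurve N).comp continuous_subtype_val).integrable_of_hasCompactSupport
    (HasCompactSupport.of_compactSpace _)

theorem integral_pow_eq_of_integral_momentCurve_eq {N k : ℕ} (hk : 1 ≤ k) (hkN : k ≤ N)
    {μ ν : Measure (Icc (0 : ℝ) 1)} [IsFiniteMeasure μ] [IsFiniteMeasure ν]
    (h : ∫ r, momentCurve N r ∂μ = ∫ r, momentCurve N r ∂ν) :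
    ∫ r : Icc (0 : ℝ) 1, (r : ℝ) ^ k ∂μ = ∫ r : Icc (0 : ℝ) 1, (r : ℝ) ^ k ∂ν := by
  have hk' := congrFun h ⟨k - 1, by omega⟩
  rw [eval_integral (integrable_momentCurve N μ).eval,
    eval_integral (integrable_momentCurve N ν).eval] at hk'
  simpa [momentCurve, Nat.sub_add_cancel hk] using hk'

theorem exists_isProbabilityMeasure_integral_momentCurve_eq {N : ℕ}
    (Λ₀ : Measure (Icc (0 : ℝ) 1)) [IsProbabilityMeasure Λ₀] (hsupp : Λ₀.support.Infinite)
    {D : Set ℝ} (hD : Dense D) :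
    ∃ Λ : Measure (Icc (0 : ℝ) 1), IsProbabilityMeasure Λ ∧ Λ ((↑) ⁻¹' D)ᶜ = 0 ∧
      ∫ r, momentCurve N r ∂Λ = ∫ r, momentCurve N r ∂Λ₀ := by
  have hM := integral_mem_interior_closure_convexHull
    ((continuous_momentCurve N).comp continuous_subtype_val) (integrable_momentCurve N Λ₀) (by
      rw [image_comp]
      exact affineSpan_momentCurve_image (hsupp.image Subtype.val_injective.injOn))
  have hdense : Icc (0 : ℝ) 1 ⊆ closure (Icc 0 1 ∩ D) :=
    calc Icc (0 : ℝ) 1 = closure (Ioo 0 1) := (closure_Ioo zero_ne_one).symm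
      _ ⊆ closure (Ioo 0 1 ∩ D) :=
        closure_minimal (hD.open_subset_closure_inter isOpen_Ioo) isClosed_closure
      _ ⊆ closure (Icc 0 1 ∩ D) := closure_mono (inter_subset_inter_left _ Ioo_subset_Icc_self)
  have hinf : (Icc (0 : ℝ) 1 ∩ D).Infinite := fun hfin =>
    Icc_infinite zero_lt_one (hfin.subset (hfin.isClosed.closure_eq ▸ hdense))
  refine exists_isProbabilityMeasure_integral_eq_of_mem_convexHull ?_
  rw [← image_image (momentCurve N) Subtype.val, Subtype.image_preimage_coe]
  refine mem_convexHull_of_mem_interior_closure_convexHull ?_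
    (affineSpan_momentCurve_image hinf) hM
  rw [range_comp, Subtype.range_coe]
  exact (image_mono hdense).trans (image_closure_subset_closure_image (continuous_momentCurve N))

theorem moment_class_uncountable_mutually_singular_general
    (N : ℕ)
    (Λ₀ : Measure (Set.Icc (0:ℝ) 1)) [IsProbabilityMeasure Λ₀]
    (hsupp : {x : Set.Icc (0:ℝ) 1 | ∀ U : Set (Set.Icc (0:ℝ) 1),
        IsOpen U → x ∈ U → 0 < Λ₀ U}.Infinite) :
    ∃ 𝔉 : Set (Measure (Set.Icc (0:ℝ) 1)),
      ¬ 𝔉.Countable ∧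
      (∀ Λ ∈ 𝔉, IsProbabilityMeasure Λ ∧
        ∀ k : ℕ, 1 ≤ k → k ≤ N →
          ∫ r : Set.Icc (0:ℝ) 1, ((r : ℝ)) ^ k ∂Λ
            = ∫ r : Set.Icc (0:ℝ) 1, ((r : ℝ)) ^ k ∂Λ₀) ∧
      (∀ Λ₁ ∈ 𝔉, ∀ Λ₂ ∈ 𝔉, Λ₁ ≠ Λ₂ → Λ₁ ⟂ₘ Λ₂) := by
  obtain ⟨ι, D, hι, hdisj, hD⟩ := AddSubgroup.exists_uncountable_pairwise_disjoint_countable_dense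
    (Rat.castHom ℝ).toAddMonoidHom.range (countable_range _) Rat.denseRange_cast
  have hsupp' : Λ₀.support.Infinite := by
    rw [Measure.support_eq_forall_isOpen]
    simpa only [imp.swap] using hsupp
  choose Λ hΛ hconc hmom using fun i =>
    exists_isProbabilityMeasure_integral_momentCurve_eq (N := N) Λ₀ hsupp' (hD i).2
  have hsing : Pairwise fun i j => Λ i ⟂ₘ Λ j := fun i j hij =>
    ⟨(↑) ⁻¹' D j, ((hD j).1.preimage Subtype.val_injective).measurableSet,
      measure_mono_null ((hdisj hij).preimage _).subset_compl_left (hconc i), hconc j⟩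
  have hinj : Injective Λ := fun i j h => by
    by_contra hij
    have hself : Λ i ⟂ₘ Λ j := hsing hij
    rw [h, Measure.MutuallySingular.self_iff] at hself
    exact IsProbabilityMeasure.ne_zero _ hself
  refine ⟨range Λ, fun hc => not_countable (α := ι) ?_, ?_, ?_⟩
  · exact countable_univ_iff.1 (by simpa using hc.preimage hinj)
  · rintro _ ⟨i, rfl⟩
    exact ⟨hΛ i, fun k hk hkN => integral_pow_eq_of_integral_momentCurve_eq hk hkN (hmom i)⟩
  · rintro _ ⟨i, rfl⟩ _ ⟨j, rfl⟩ hne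
    exact hsing (ne_of_apply_ne Λ hne)

/-- For every `N ≥ 1` and every Borel probability measure `Λ₀` on `[0,1]` with infinite
topological support, there is an uncountable family of Borel probability measures on `[0,1]`,
all sharing the first `N` moments of `Λ₀`, whose distinct members are pairwise mutually
singular (equivalently, at total variation distance `2`). -/
theorem moment_class_uncountable_mutually_singular
    (N : ℕ) (hN : 1 ≤ N)
    (Λ₀ : Measure (Set.Icc (0:ℝ) 1)) [IsProbabilityMeasure Λ₀]
    (hsupp : {x : Set.Icc (0:ℝ) 1 | ∀ U : Set (Set.Icc (0:ℝ) 1),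
        IsOpen U → x ∈ U → 0 < Λ₀ U}.Infinite) :
    ∃ 𝔉 : Set (Measure (Set.Icc (0:ℝ) 1)),
      ¬ 𝔉.Countable ∧
      (∀ Λ ∈ 𝔉, IsProbabilityMeasure Λ ∧
        ∀ k : ℕ, 1 ≤ k → k ≤ N →
          ∫ r : Set.Icc (0:ℝ) 1, ((r : ℝ)) ^ k ∂Λ
            = ∫ r : Set.Icc (0:ℝ) 1, ((r : ℝ)) ^ k ∂Λ₀) ∧
      (∀ Λ₁ ∈ 𝔉, ∀ Λ₂ ∈ 𝔉, Λ₁ ≠ Λ₂ → Λ₁ ⟂ₘ Λ₂) :=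
  moment_class_uncountable_mutually_singular_general N Λ₀ hsupp
end

section
/- Fix integers m ≥ 1 and n ≥ 3, real constants c₁,…,c_m, indices i₁,…,i_m ∈ {3,…,n}, and signs j₁,…,j_m ∈ {0,1}. Let C_m = { Λ ∈ M₁([0,1]) : (−1)^{j_k} ∫_{[0,1]} r^{i_k − 2} Λ(dr) ≤ c_k for all k ∈ {1,…,m} }, and let C_D be the set of Λ ∈ C_m that are discrete with at most m + 1 atoms, i.e. Λ = Σ_{k=1}^p w_k δ_{x_k} with 1 ≤ p ≤ m+1, w_k ≥ 0, x_k ∈ [0,1] and Σ_{k=1}^p w_k = 1. Then for every Borel measurable q : [0,1] → ℝ that is bounded on at least one side, with F(ν) := ∫_{[0,1]} q dν (a value in the extended reals), one has inf_{ν ∈ C_m} F(ν) = inf_{ν ∈ C_D} F(ν) and sup_{ν ∈ C_m} F(ν) = sup_{ν ∈ C_D} F(ν). -/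
/-! Given `ν ∈ C_m` and `t > ∫ q dν`, pick an integrable `g ≥ q` with `∫ g dν < t` (a
truncation `max q (-N)` when `∫ q dν = -∞`). The point `(∫ F dν, ∫ g dν)`, `F` the vector of
moment functions, lies in the convex hull of the range of `(F, g)` (induction on the dimension,
separating by a hyperplane). Carathéodory reduction along affine dependences of the atoms, with
the sign chosen so that `∑ wₖ g(xₖ)` does not increase, leaves a discrete `μ` with at most
`m + 1` atoms, the moments of `ν`, and `∫ q dμ ≤ ∫ g dν < t`. The supremum is the infimum
for `-q`. -/

open MeasureTheory

/-- The extended-real-valued integral of a real function `q` against a measure `μ`: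
positive part minus negative part, computed with Lebesgue integrals.  For `q` bounded
on at least one side (and `μ` finite) this is the usual extended-real integral
`∫ q dμ ∈ [-∞, ∞]`. -/
noncomputable def eIntegral {α : Type*} [MeasurableSpace α]
    (q : α → ℝ) (μ : Measure α) : EReal :=
  ((∫⁻ x, ENNReal.ofReal (q x) ∂μ : ENNReal) : EReal)
    - ((∫⁻ x, ENNReal.ofReal (-(q x)) ∂μ : ENNReal) : EReal)

open Set Filter Topology Module

section Order

variable {α β : Type*} [CompleteLinearOrder β] {f : α → β} {S T : Set α}

theorem biInf_eq_biInf_of_forall_exists_lt (hTS : T ⊆ S)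
    (h : ∀ x ∈ S, ∀ b, f x < b → ∃ y ∈ T, f y < b) : ⨅ x ∈ S, f x = ⨅ x ∈ T, f x :=
  le_antisymm (biInf_mono hTS) <| le_iInf₂ fun x hx => le_of_forall_gt fun b hb =>
    let ⟨y, hyT, hyb⟩ := h x hx b hb
    (iInf₂_le y hyT).trans_lt hyb

theorem biSup_eq_biSup_of_forall_exists_gt (hTS : T ⊆ S)
    (h : ∀ x ∈ S, ∀ b, b < f x → ∃ y ∈ T, b < f y) : ⨆ x ∈ S, f x = ⨆ x ∈ T, f x :=
  biInf_eq_biInf_of_forall_exists_lt (β := βᵒᵈ) hTS h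

end Order

theorem Convex.exists_ne_zero_forall_le_of_notMem {E : Type*} [NormedAddCommGroup E]
    [NormedSpace ℝ E] [FiniteDimensional ℝ E] {C : Set E} {z : E} (hC : Convex ℝ C)
    (hCne : C.Nonempty) (hz : z ∉ C) : ∃ φ : StrongDual ℝ E, φ ≠ 0 ∧ ∀ y ∈ C, φ y ≤ φ z := by
  by_cases hint : (interior C).Nonempty
  · exact geometric_hahn_banach_of_nonempty_interior_point hC (fun h => hz (interior_subset h))
      hint
  -- Otherwise `C` lies in a proper affine subspace, on which some `ψ ≠ 0` is constant.
  obtain ⟨y₀, hy₀⟩ := hCne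
  have hdir : (affineSpan ℝ C).direction < ⊤ := by
    rw [lt_top_iff_ne_top, ne_eq, AffineSubspace.direction_eq_top_iff_of_nonempty
      ⟨y₀, subset_affineSpan ℝ C hy₀⟩, ← hC.interior_nonempty_iff_affineSpan_eq_top]
    exact hint
  obtain ⟨ψ, hψ0, hψ⟩ := Submodule.exists_le_ker_of_lt_top _ hdir
  have hconst : ∀ y ∈ C, ψ y = ψ y₀ := fun y hy => by
    simpa [sub_eq_zero] using hψ (AffineSubspace.vsub_mem_direction
      (subset_affineSpan ℝ C hy) (subset_affineSpan ℝ C hy₀))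
  have hφ0 : LinearMap.toContinuousLinearMap ψ ≠ 0 := by simpa using hψ0
  rcases le_total (ψ y₀) (ψ z) with h | h
  · exact ⟨_, hφ0, fun y hy => by simp [hconst y hy, h]⟩
  · exact ⟨_, neg_ne_zero.2 hφ0, fun y hy => by simp [hconst y hy, h]⟩

theorem integral_mem_convexHull {α E : Type*} [MeasurableSpace α] [NormedAddCommGroup E]
    [NormedSpace ℝ E] [FiniteDimensional ℝ E] {μ : Measure α} [IsProbabilityMeasure μ]
    {s : Set E} {f : α → E} (hfs : ∀ᵐ a ∂μ, f a ∈ s) (hf : Integrable f μ) :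
    ∫ a, f a ∂μ ∈ convexHull ℝ s := by
  obtain ⟨d, hd⟩ : ∃ d, finrank ℝ E = d := ⟨_, rfl⟩
  induction d using Nat.strong_induction_on generalizing E with
  | _ d ih =>
  by_contra hz
  set z := ∫ a, f a ∂μ
  obtain ⟨a₀, ha₀⟩ := hfs.exists
  obtain ⟨φ, hφ0, hφ⟩ := (convex_convexHull ℝ s).exists_ne_zero_forall_le_of_notMem
    ⟨f a₀, subset_convexHull ℝ s ha₀⟩ hz
  -- `φ ∘ f ≤ φ z` with equality in mean, so `f - z` lies a.e. in the hyperplane `ker φ`.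
  have hker : ∀ᵐ a ∂μ, φ (f a - z) = 0 := by
    have hint : Integrable (fun a => φ z - φ (f a)) μ :=
      (integrable_const _).sub (φ.integrable_comp hf)
    have hle : 0 ≤ᵐ[μ] fun a => φ z - φ (f a) :=
      hfs.mono fun a ha => sub_nonneg.2 (hφ _ (subset_convexHull ℝ s ha))
    have hmean : ∫ a, (φ z - φ (f a)) ∂μ = 0 := by
      rw [integral_sub (integrable_const _) (φ.integrable_comp hf), φ.integral_comp_comm hf]
      simp [z]
    filter_upwards [(integral_eq_zero_iff_of_nonneg_ae hle hint).1 hmean] with a ha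
    have ha : φ z - φ (f a) = 0 := ha
    rw [map_sub]
    linarith
  set V := LinearMap.ker (φ : E →ₗ[ℝ] ℝ)
  obtain ⟨P, hP⟩ := Submodule.ClosedComplemented.of_finiteDimensional V
  have hV : finrank ℝ V < d := hd ▸ Submodule.finrank_lt
    (fun h => hφ0 (ContinuousLinearMap.coe_injective (LinearMap.ker_eq_top.1 h)))
  have hfz : Integrable (fun a => f a - z) μ := hf.sub (integrable_const z)
  have hPf : ∀ᵐ a ∂μ, z + (P (f a - z) : E) = f a := hker.mono fun a ha => by
    rw [show P (f a - z) = ⟨f a - z, ha⟩ from hP ⟨_, ha⟩]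
    exact add_sub_cancel z (f a)
  have h0 : (0 : V) ∈ convexHull ℝ {v : V | z + (v : E) ∈ s} := by
    have := ih _ hV (s := {v : V | z + (v : E) ∈ s}) (f := fun a => P (f a - z))
      (by filter_upwards [hfs, hPf] with a ha h; exact (h.symm ▸ ha :))
      (P.integrable_comp hfz) rfl
    rwa [P.integral_comp_comm hfz, integral_sub hf (integrable_const z), integral_const,
      probReal_univ, one_smul, sub_self, map_zero] at this
  let A : V →ᵃ[ℝ] E := (AffineEquiv.constVAdd ℝ E z).toAffineMap.comp V.subtype.toAffineMap
  have hAs : A '' {v : V | z + (v : E) ∈ s} ⊆ s := by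
    rintro _ ⟨v, hv, rfl⟩
    exact hv
  apply hz
  have := (A.image_convexHull _).subset (mem_image_of_mem A h0)
  simpa [A] using convexHull_mono hAs this

theorem exists_nonneg_add_smul_eq_zero {ι : Type*} [Fintype ι] {w σ : ι → ℝ}
    (hw : ∀ i, 0 ≤ w i) (hσ : ∃ i, σ i < 0) :
    ∃ t : ℝ, ∃ i₀, 0 ≤ t ∧ (∀ i, 0 ≤ w i + t * σ i) ∧ w i₀ + t * σ i₀ = 0 := by
  classical
  obtain ⟨i₀, hi₀, hmin⟩ := Finset.exists_min_image {i | σ i < 0} (fun i => w i / -σ i)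
    (by simpa [Finset.Nonempty] using hσ)
  have hσ₀ : σ i₀ < 0 := by simpa using hi₀
  refine ⟨w i₀ / -σ i₀, i₀, div_nonneg (hw i₀) (by linarith), fun i => ?_, ?_⟩
  · rcases le_or_gt 0 (σ i) with h | h
    · exact add_nonneg (hw i) (mul_nonneg (div_nonneg (hw i₀) (by linarith)) h)
    · have := hmin i (by simpa using h)
      rw [le_div_iff₀ (by linarith)] at this
      linarith
  · rw [div_neg, neg_mul, div_mul_cancel₀ _ hσ₀.ne, add_neg_cancel]

theorem exists_weight_eq_zero_of_finrank_succ_lt {ι E : Type*} [Fintype ι] [AddCommGroup E]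
    [Module ℝ E] [Module.Finite ℝ E] (hι : finrank ℝ E + 1 < Fintype.card ι) {w : ι → ℝ}
    (hw : ∀ i, 0 ≤ w i) (v : ι → E) (g : ι → ℝ) :
    ∃ w' : ι → ℝ, ∃ i₀, w' i₀ = 0 ∧ (∀ i, 0 ≤ w' i) ∧ ∑ i, w' i = ∑ i, w i ∧
      ∑ i, w' i • v i = ∑ i, w i • v i ∧ ∑ i, w' i * g i ≤ ∑ i, w i * g i := by
  -- An affine dependence among the `v i`, i.e. a linear one among the `(v i, 1)`.
  have hdep : ¬ LinearIndependent ℝ fun i => (v i, (1 : ℝ)) := fun h => by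
    have := h.fintype_card_le_finrank
    rw [finrank_prod, finrank_self] at this
    omega
  obtain ⟨c, hc, i₁, hi₁⟩ := Fintype.not_linearIndependent_iff.1 hdep
  have hcv : ∑ i, c i • v i = 0 := by simpa [Prod.fst_sum] using congrArg Prod.fst hc
  have hc1 : ∑ i, c i = 0 := by simpa [Prod.snd_sum] using congrArg Prod.snd hc
  have hneg : ∀ σ : ι → ℝ, ∑ i, σ i = 0 → σ i₁ ≠ 0 → ∃ i, σ i < 0 := fun σ hσ hσ₁ => by
    by_contra! h
    exact hσ₁ (congrFun ((Fintype.sum_eq_zero_iff_of_nonneg h).1 hσ) i₁)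
  obtain ⟨σ, hσv, hσ1, hσg, hσneg⟩ : ∃ σ : ι → ℝ, ∑ i, σ i • v i = 0 ∧ ∑ i, σ i = 0 ∧
      ∑ i, σ i * g i ≤ 0 ∧ ∃ i, σ i < 0 := by
    rcases le_total (∑ i, c i * g i) 0 with h | h
    · exact ⟨c, hcv, hc1, h, hneg c hc1 hi₁⟩
    · refine ⟨-c, by simp [hcv], by simp [hc1], by simpa using h, hneg _ (by simp [hc1]) ?_⟩
      simpa using hi₁
  obtain ⟨t, i₀, ht, hnn, hi₀⟩ := exists_nonneg_add_smul_eq_zero hw hσneg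
  refine ⟨fun i => w i + t * σ i, i₀, hi₀, hnn, ?_, ?_, ?_⟩
  · simp [Finset.sum_add_distrib, ← Finset.mul_sum, hσ1]
  · simp [add_smul, Finset.sum_add_distrib, mul_smul, ← Finset.smul_sum, hσv]
  · simp only [add_mul, Finset.sum_add_distrib, mul_assoc, ← Finset.mul_sum]
    nlinarith

theorem exists_fin_le_finrank_succ_sum_smul_eq {α E : Type*} [AddCommGroup E] [Module ℝ E]
    [Module.Finite ℝ E] (F : α → E) (g : α → ℝ) {p : ℕ} {w : Fin p → ℝ} (hw : ∀ k, 0 ≤ w k)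
    (x : Fin p → α) :
    ∃ p' ≤ finrank ℝ E + 1, ∃ (w' : Fin p' → ℝ) (x' : Fin p' → α), (∀ k, 0 ≤ w' k) ∧
      ∑ k, w' k = ∑ k, w k ∧ ∑ k, w' k • F (x' k) = ∑ k, w k • F (x k) ∧
      ∑ k, w' k * g (x' k) ≤ ∑ k, w k * g (x k) := by
  induction p with
  | zero => exact ⟨0, Nat.zero_le _, w, x, hw, rfl, rfl, le_rfl⟩
  | succ p ih =>
    rcases le_or_gt (p + 1) (finrank ℝ E + 1) with hp | hp
    · exact ⟨p + 1, hp, w, x, hw, rfl, rfl, le_rfl⟩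
    obtain ⟨w₁, k₀, hk₀, hw₁, h1, hF, hg⟩ :=
      exists_weight_eq_zero_of_finrank_succ_lt (by simpa using hp) hw (F ∘ x) (g ∘ x)
    obtain ⟨p', hp', w', x', hw', h1', hF', hg'⟩ :=
      ih (w := w₁ ∘ k₀.succAbove) (fun k => hw₁ _) (x ∘ k₀.succAbove)
    simp only [Function.comp_apply] at hF hg h1' hF' hg'
    refine ⟨p', hp', w', x', hw', ?_, ?_, ?_⟩
    · rw [h1', ← h1, Fin.sum_univ_succAbove w₁ k₀, hk₀, zero_add]
    · rw [hF', ← hF, Fin.sum_univ_succAbove (fun k => w₁ k • F (x k)) k₀, hk₀, zero_smul,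
        zero_add]
    · refine hg'.trans (le_of_eq_of_le ?_ hg)
      rw [Fin.sum_univ_succAbove (fun k => w₁ k * g (x k)) k₀, hk₀, zero_mul, zero_add]

theorem exists_fin_of_mem_convexHull_range {α E : Type*} [AddCommGroup E] [Module ℝ E]
    {F : α → E} {y : E} (hy : y ∈ convexHull ℝ (range F)) :
    ∃ p, ∃ (w : Fin p → ℝ) (x : Fin p → α), (∀ k, 0 ≤ w k) ∧ ∑ k, w k = 1 ∧
      ∑ k, w k • F (x k) = y := by
  obtain ⟨ι, _, w, z, hw0, hw1, hz, rfl⟩ := mem_convexHull_iff_exists_fintype.1 hy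
  choose x hx using hz
  let e := (Fintype.equivFin ι).symm
  refine ⟨Fintype.card ι, w ∘ e, x ∘ e, fun k => hw0 _, by rw [← hw1]; exact e.sum_comp w, ?_⟩
  simp only [Function.comp_apply, hx]
  exact e.sum_comp fun i => w i • z i

theorem exists_fin_sum_eq_integral_and_le {α E : Type*} [MeasurableSpace α]
    [NormedAddCommGroup E] [NormedSpace ℝ E] [FiniteDimensional ℝ E] {μ : Measure α}
    [IsProbabilityMeasure μ] {F : α → E} {g : α → ℝ} (hF : Integrable F μ)
    (hg : Integrable g μ) :
    ∃ p ≤ finrank ℝ E + 1, ∃ (w : Fin p → ℝ) (x : Fin p → α), (∀ k, 0 ≤ w k) ∧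
      ∑ k, w k = 1 ∧ ∑ k, w k • F (x k) = ∫ a, F a ∂μ ∧ ∑ k, w k * g (x k) ≤ ∫ a, g a ∂μ := by
  have hmem := integral_mem_convexHull (s := range fun a => (F a, g a))
    (ae_of_all _ mem_range_self) (hF.prodMk hg)
  rw [integral_pair hF hg] at hmem
  obtain ⟨p, w, x, hw, hw1, hsum⟩ := exists_fin_of_mem_convexHull_range hmem
  obtain ⟨p', hp', w', x', hw', h1, hF', hg'⟩ := exists_fin_le_finrank_succ_sum_smul_eq F g hw x
  have hsumF : ∑ k, w k • F (x k) = ∫ a, F a ∂μ := by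
    simpa [Prod.fst_sum] using congrArg Prod.fst hsum
  have hsumg : ∑ k, w k * g (x k) = ∫ a, g a ∂μ := by
    simpa [Prod.snd_sum] using congrArg Prod.snd hsum
  exact ⟨p', hp', w', x', hw', h1.trans hw1, hF'.trans hsumF, hg'.trans hsumg.le⟩

section eIntegral

variable {α : Type*} [MeasurableSpace α] {μ : Measure α} {q : α → ℝ}

theorem eIntegral_eq_integral (hq : Integrable q μ) : eIntegral q μ = (∫ a, q a ∂μ : ℝ) := by
  have hfin : ∀ f : α → ℝ, Integrable f μ → ∫⁻ a, ENNReal.ofReal (f a) ∂μ ≠ ⊤ := fun f hf =>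
    ((lintegral_mono fun a => Real.ofReal_le_enorm (f a)).trans_lt hf.2).ne
  rw [integral_eq_lintegral_pos_part_sub_lintegral_neg_part hq, EReal.coe_sub,
    EReal.coe_ennreal_toReal (hfin q hq), EReal.coe_ennreal_toReal (hfin (fun a => -q a) hq.neg)]
  rfl

theorem eIntegral_neg (h : ∫⁻ a, ENNReal.ofReal (q a) ∂μ ≠ ⊤ ∨
    ∫⁻ a, ENNReal.ofReal (-q a) ∂μ ≠ ⊤) : eIntegral (-q) μ = -eIntegral q μ := by
  simp only [eIntegral, Pi.neg_apply, neg_neg]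
  rw [EReal.neg_sub (Or.inl (EReal.coe_ennreal_ne_bot _)) (by simpa using h), add_comm,
    sub_eq_add_neg]

theorem lintegral_ofReal_ne_top_or_of_bdd [IsFiniteMeasure μ]
    (hbd : (∃ b, ∀ a, b ≤ q a) ∨ ∃ b, ∀ a, q a ≤ b) :
    ∫⁻ a, ENNReal.ofReal (q a) ∂μ ≠ ⊤ ∨ ∫⁻ a, ENNReal.ofReal (-q a) ∂μ ≠ ⊤ := by
  have hfin : ∀ (f : α → ℝ) (b : ℝ), (∀ a, f a ≤ b) → ∫⁻ a, ENNReal.ofReal (f a) ∂μ ≠ ⊤ :=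
    fun f b hb => ((lintegral_mono fun a => ENNReal.ofReal_le_ofReal (hb a)).trans_lt
      (lintegral_const_lt_top ENNReal.ofReal_ne_top)).ne
  rcases hbd with ⟨b, hb⟩ | ⟨b, hb⟩
  · exact Or.inr (hfin _ (-b) fun a => neg_le_neg (hb a))
  · exact Or.inl (hfin q b hb)

theorem tendsto_eIntegral_max_neg_natCast (hq : Measurable q)
    (hA : ∫⁻ a, ENNReal.ofReal (q a) ∂μ ≠ ⊤) :
    Tendsto (fun N : ℕ => eIntegral (fun a => max (q a) (-N)) μ) atTop (𝓝 (eIntegral q μ)) := by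
  have hpos (N : ℕ) (a : α) : ENNReal.ofReal (max (q a) (-N)) = ENNReal.ofReal (q a) := by
    rw [ENNReal.ofReal_max, ENNReal.ofReal_of_nonpos (neg_nonpos.2 N.cast_nonneg),
      max_eq_left zero_le]
  have hneg (N : ℕ) (a : α) :
      ENNReal.ofReal (-max (q a) (-N)) = min (ENNReal.ofReal (-q a)) N := by
    rw [← min_neg_neg, neg_neg, ENNReal.ofReal_min, ENNReal.ofReal_natCast]
  have hB : Tendsto (fun N : ℕ => ∫⁻ a, min (ENNReal.ofReal (-q a)) N ∂μ) atTop
      (𝓝 (∫⁻ a, ENNReal.ofReal (-q a) ∂μ)) :=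
    lintegral_tendsto_of_tendsto_of_monotone
      (fun N => (hq.neg.ennreal_ofReal.min measurable_const).aemeasurable)
      (ae_of_all _ fun a N M hNM => min_le_min_left _ (by exact_mod_cast hNM))
      (ae_of_all _ fun a => by
        simpa using tendsto_const_nhds.min ENNReal.tendsto_nat_nhds_top)
  simp only [eIntegral, hpos, hneg, sub_eq_add_neg]
  exact (EReal.continuousAt_add (Or.inl (EReal.coe_ennreal_eq_top_iff.not.2 hA))
    (Or.inl (EReal.coe_ennreal_ne_bot _))).tendsto.comp (tendsto_const_nhds.prodMk_nhds
      ((continuous_neg.tendsto _).comp ((continuous_coe_ennreal_ereal.tendsto _).comp hB)))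

theorem exists_integrable_ge_integral_lt [IsFiniteMeasure μ] (hq : Measurable q)
    (h : ∫⁻ a, ENNReal.ofReal (q a) ∂μ ≠ ⊤ ∨ ∫⁻ a, ENNReal.ofReal (-q a) ∂μ ≠ ⊤) {t : EReal}
    (ht : eIntegral q μ < t) :
    ∃ g : α → ℝ, Integrable g μ ∧ q ≤ g ∧ ((∫ a, g a ∂μ : ℝ) : EReal) < t := by
  have hA : ∫⁻ a, ENNReal.ofReal (q a) ∂μ ≠ ⊤ := by
    refine h.elim id fun hB hAtop => ht.not_ge ?_
    rw [eIntegral, hAtop, EReal.coe_ennreal_top,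
      EReal.top_sub (EReal.coe_ennreal_eq_top_iff.not.2 hB)]
    exact le_top
  obtain ⟨N, hN⟩ := ((tendsto_eIntegral_max_neg_natCast hq hA).eventually (gt_mem_nhds ht)).exists
  have hqpos : Integrable (fun a => max (q a) 0) μ :=
    (lintegral_ofReal_ne_top_iff_integrable (f := fun a => max (q a) 0)
      (hq.max measurable_const).aestronglyMeasurable (ae_of_all _ fun a => le_max_right _ _)).1
      (by simpa [ENNReal.ofReal_max] using hA)
  have hint : Integrable (fun a => max (q a) (-N)) μ :=
    integrable_of_le_of_le (hq.max measurable_const).aestronglyMeasurable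
      (ae_of_all _ fun a => le_max_right _ _)
      (ae_of_all _ fun a => max_le_max_left _ (by simp)) (integrable_const _) hqpos
  exact ⟨_, hint, fun a => le_max_left _ _, eIntegral_eq_integral hint ▸ hN⟩

end eIntegral

section Discrete

variable {α : Type*} [MeasurableSpace α] {p : ℕ} {w : Fin p → ℝ} {x : Fin p → α}

theorem isProbabilityMeasure_sum_smul_dirac (hw : ∀ k, 0 ≤ w k) (hw1 : ∑ k, w k = 1) :
    IsProbabilityMeasure (∑ k, ENNReal.ofReal (w k) • Measure.dirac (x k)) := by
  constructor
  simp [Measure.finsetSum_apply, ← ENNReal.ofReal_sum_of_nonneg fun k _ => hw k, hw1]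

variable [MeasurableSingletonClass α]

theorem integral_sum_smul_dirac {E : Type*} [NormedAddCommGroup E] [NormedSpace ℝ E]
    [CompleteSpace E] (hw : ∀ k, 0 ≤ w k) (f : α → E) :
    ∫ a, f a ∂(∑ k, ENNReal.ofReal (w k) • Measure.dirac (x k)) = ∑ k, w k • f (x k) := by
  rw [integral_finsetSum_measure fun k _ =>
    (integrable_dirac enorm_lt_top).smul_measure ENNReal.ofReal_ne_top]
  simp [integral_smul_measure, integral_dirac, ENNReal.toReal_ofReal (hw _)]

theorem eIntegral_sum_smul_dirac (hw : ∀ k, 0 ≤ w k) (q : α → ℝ) :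
    eIntegral q (∑ k, ENNReal.ofReal (w k) • Measure.dirac (x k)) = (∑ k, w k * q (x k) : ℝ) := by
  rw [eIntegral_eq_integral (integrable_finsetSum_measure.2 fun k _ =>
    (integrable_dirac enorm_lt_top).smul_measure ENNReal.ofReal_ne_top),
    integral_sum_smul_dirac hw]
  rfl

end Discrete

theorem exists_sum_smul_dirac_integral_eq_eIntegral_lt {α ι : Type*} [MeasurableSpace α]
    [MeasurableSingletonClass α] [Fintype ι] {ν : Measure α} [IsProbabilityMeasure ν]
    {φ : ι → α → ℝ} (hφ : ∀ l, Integrable (φ l) ν) {q : α → ℝ} (hq : Measurable q)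
    (h : ∫⁻ a, ENNReal.ofReal (q a) ∂ν ≠ ⊤ ∨ ∫⁻ a, ENNReal.ofReal (-q a) ∂ν ≠ ⊤) {t : EReal}
    (ht : eIntegral q ν < t) :
    ∃ p, 1 ≤ p ∧ p ≤ Fintype.card ι + 1 ∧ ∃ (w : Fin p → ℝ) (x : Fin p → α), (∀ k, 0 ≤ w k) ∧
      ∑ k, w k = 1 ∧
      (∀ l, ∫ a, φ l a ∂(∑ k, ENNReal.ofReal (w k) • Measure.dirac (x k)) = ∫ a, φ l a ∂ν) ∧
      eIntegral q (∑ k, ENNReal.ofReal (w k) • Measure.dirac (x k)) < t := by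
  obtain ⟨g, hg, hqg, hgt⟩ := exists_integrable_ge_integral_lt hq h ht
  obtain ⟨p, hp, w, x, hw, hw1, hφx, hgx⟩ :=
    exists_fin_sum_eq_integral_and_le (F := fun a l => φ l a) (Integrable.of_eval hφ) hg
  refine ⟨p, Nat.pos_of_ne_zero ?_, by simpa using hp, w, x, hw, hw1, fun l => ?_, ?_⟩
  · rintro rfl
    simp at hw1
  · rw [integral_sum_smul_dirac hw, ← eval_integral hφ, ← hφx]
    simp
  · rw [eIntegral_sum_smul_dirac hw]
    refine lt_of_le_of_lt ?_ hgt
    exact EReal.coe_le_coe_iff.2 <| (Finset.sum_le_sum fun k _ =>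
      mul_le_mul_of_nonneg_left (hqg (x k)) (hw k)).trans hgx

theorem extrema_on_moment_constraints_attained_on_discrete_general
    (m : ℕ) (c : Fin m → ℝ) (i : Fin m → ℕ) (j : Fin m → ℕ)
    (Cm CD : Set (Measure (Set.Icc (0:ℝ) 1)))
    (hCm : Cm = {Λ | IsProbabilityMeasure Λ ∧
      ∀ k : Fin m, (-1 : ℝ) ^ (j k) * ∫ r : Set.Icc (0:ℝ) 1, ((r : ℝ)) ^ (i k - 2) ∂Λ ≤ c k})
    (hCD : CD = {Λ ∈ Cm | ∃ p : ℕ, 1 ≤ p ∧ p ≤ m + 1 ∧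
      ∃ w : Fin p → ℝ, ∃ x : Fin p → Set.Icc (0:ℝ) 1,
        (∀ k, 0 ≤ w k) ∧ (∑ k, w k = 1) ∧
        Λ = ∑ k, (ENNReal.ofReal (w k)) • Measure.dirac (x k)})
    (q : Set.Icc (0:ℝ) 1 → ℝ) (hq : Measurable q)
    (hbd : (∃ b, ∀ x, b ≤ q x) ∨ (∃ b, ∀ x, q x ≤ b)) :
    (⨅ ν ∈ Cm, eIntegral q ν) = (⨅ ν ∈ CD, eIntegral q ν) ∧
    (⨆ ν ∈ Cm, eIntegral q ν) = (⨆ ν ∈ CD, eIntegral q ν) := by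
  have hCDCm : CD ⊆ Cm := hCD ▸ sep_subset _ _
  have key : ∀ q' : Icc (0 : ℝ) 1 → ℝ, Measurable q' →
      ((∃ b, ∀ x, b ≤ q' x) ∨ ∃ b, ∀ x, q' x ≤ b) →
      ∀ ν ∈ Cm, ∀ t, eIntegral q' ν < t → ∃ μ ∈ CD, eIntegral q' μ < t := by
    intro q' hq' hbd' ν hν t ht
    rw [hCm] at hν
    obtain ⟨hν, hνc⟩ := hν
    obtain ⟨p, hp1, hp, w, x, hw, hw1, hmom, hlt⟩ :=
      exists_sum_smul_dirac_integral_eq_eIntegral_lt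
        (φ := fun k (r : Icc (0 : ℝ) 1) => (r : ℝ) ^ (i k - 2))
        (fun k => (continuous_subtype_val.pow _).integrable_of_hasCompactSupport
          (HasCompactSupport.of_compactSpace _))
        hq' (lintegral_ofReal_ne_top_or_of_bdd hbd') ht
    refine ⟨_, ?_, hlt⟩
    rw [hCD, hCm]
    exact ⟨⟨isProbabilityMeasure_sum_smul_dirac hw hw1, fun k => hmom k ▸ hνc k⟩,
      p, hp1, by simpa using hp, w, x, hw, hw1, rfl⟩
  have hneg : ∀ μ ∈ Cm, eIntegral (-q) μ = -eIntegral q μ := fun μ hμ => by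
    rw [hCm] at hμ
    have := hμ.1
    exact eIntegral_neg (lintegral_ofReal_ne_top_or_of_bdd hbd)
  refine ⟨biInf_eq_biInf_of_forall_exists_lt hCDCm (key q hq hbd),
    biSup_eq_biSup_of_forall_exists_gt hCDCm fun ν hν b hb => ?_⟩
  obtain ⟨μ, hμ, hlt⟩ := key (-q) hq.neg
    (hbd.symm.imp (fun ⟨b, hb⟩ => ⟨-b, fun x => neg_le_neg (hb x)⟩)
      (fun ⟨b, hb⟩ => ⟨-b, fun x => neg_le_neg (hb x)⟩))
    ν hν (-b) (by rw [hneg ν hν]; exact EReal.neg_lt_neg_iff.2 hb)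
  exact ⟨μ, hμ, by rwa [hneg μ (hCDCm hμ), EReal.neg_lt_neg_iff] at hlt⟩

/-- Extrema of measure-affine functionals `ν ↦ ∫ q dν` over a moment-constrained set
`C_m ⊆ M₁([0,1])` coincide with their extrema over the subset `C_D` of discrete
measures with at most `m + 1` atoms. -/
theorem extrema_on_moment_constraints_attained_on_discrete
    (m n : ℕ) (hm : 1 ≤ m) (hn : 3 ≤ n)
    (c : Fin m → ℝ) (i : Fin m → ℕ) (hi : ∀ k, 3 ≤ i k ∧ i k ≤ n)
    (j : Fin m → ℕ) (hj : ∀ k, j k ≤ 1)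
    (Cm CD : Set (Measure (Set.Icc (0:ℝ) 1)))
    (hCm : Cm = {Λ | IsProbabilityMeasure Λ ∧
      ∀ k : Fin m, (-1 : ℝ) ^ (j k) * ∫ r : Set.Icc (0:ℝ) 1, ((r : ℝ)) ^ (i k - 2) ∂Λ ≤ c k})
    (hCD : CD = {Λ ∈ Cm | ∃ p : ℕ, 1 ≤ p ∧ p ≤ m + 1 ∧
      ∃ w : Fin p → ℝ, ∃ x : Fin p → Set.Icc (0:ℝ) 1,
        (∀ k, 0 ≤ w k) ∧ (∑ k, w k = 1) ∧
        Λ = ∑ k, (ENNReal.ofReal (w k)) • Measure.dirac (x k)})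
    (q : Set.Icc (0:ℝ) 1 → ℝ) (hq : Measurable q)
    (hbd : (∃ b, ∀ x, b ≤ q x) ∨ (∃ b, ∀ x, q x ≤ b)) :
    (⨅ ν ∈ Cm, eIntegral q ν) = (⨅ ν ∈ CD, eIntegral q ν) ∧
    (⨆ ν ∈ Cm, eIntegral q ν) = (⨆ ν ∈ CD, eIntegral q ν) :=
  extrema_on_moment_constraints_attained_on_discrete_general m c i j Cm CD hCm hCD q hq hbd
end

section
/- For every d ≥ 1 and all x, y in the simplex S_d, ∫₀¹ ‖Ψ(u, x) − Ψ(u, y)‖₂² du = 2 − ‖x − y‖₂² − 2 Σ_{i=1}^d Leb( (S_{i−1}^x, S_i^x] ∩ (S_{i−1}^y, S_i^y] ), where Leb denotes Lebesgue measure on ℝ and ‖·‖₂ is the Euclidean norm on ℝ^d. -/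
open MeasureTheory

/-- Partial sum `S_i^x = x_1 + ⋯ + x_i` of the first `i` coordinates of `x : ℝ^d`. -/
def partSum {d : ℕ} (x : Fin d → ℝ) (i : ℕ) : ℝ :=
  ∑ j ∈ Finset.univ.filter (fun j : Fin d => (j : ℕ) < i), x j

/-- The vector field `Ψ(u, x)` whose `i`-th component is
`1_{(S_{i-1}^x, S_i^x]}(u) − x_i`. -/
noncomputable def Psi {d : ℕ} (x : Fin d → ℝ) (u : ℝ) (i : Fin d) : ℝ :=
  (if u ∈ Set.Ioc (partSum x (i : ℕ)) (partSum x ((i : ℕ) + 1)) then (1 : ℝ) else 0) - x i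

/-! Componentwise, `Ψ(u, x)_i − Ψ(u, y)_i = 1_A(u) − 1_B(u) − (x_i − y_i)`, where `A` and `B` are the
`i`-th cells of the partitions of `(0, 1]` cut out by the partial sums of `x` and `y`; their lengths are
`x_i` and `y_i`. Expanding the square with `1_A² = 1_A` and `1_A 1_B = 1_{A ∩ B}` and integrating gives
`x_i + y_i − (x_i − y_i)² − 2 Leb(A ∩ B)`, and summing over `i` with `∑ x_i = ∑ y_i = 1` gives the
formula. -/

open Set

section Indicator

variable {α : Type*}

lemma sq_indicator_sub_indicator_sub_const (A B : Set α) (c : ℝ) (u : α) :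
    (A.indicator 1 u - B.indicator 1 u - c) ^ 2
      = (1 - 2 * c) * A.indicator 1 u + (1 + 2 * c) * B.indicator 1 u
        - 2 * (A ∩ B).indicator 1 u + c ^ 2 := by
  by_cases hA : u ∈ A <;> by_cases hB : u ∈ B <;> simp [hA, hB] <;> ring

variable [MeasurableSpace α] {μ : Measure α} [IsFiniteMeasure μ] {A B : Set α}

@[fun_prop]
lemma integrable_indicator_one {S : Set α} (hS : MeasurableSet S) :
    Integrable (S.indicator (1 : α → ℝ)) μ :=
  (integrable_const 1).indicator hS

lemma integrable_sq_indicator_sub_indicator_sub_const (hA : MeasurableSet A)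
    (hB : MeasurableSet B) (c : ℝ) :
    Integrable (fun u => (A.indicator 1 u - B.indicator 1 u - c) ^ 2) μ := by
  have hAB := hA.inter hB
  simp_rw [sq_indicator_sub_indicator_sub_const]
  fun_prop (disch := assumption)

lemma integral_sq_indicator_sub_indicator_sub_const (hA : MeasurableSet A)
    (hB : MeasurableSet B) (c : ℝ) :
    ∫ u, (A.indicator 1 u - B.indicator 1 u - c) ^ 2 ∂μ
      = μ.real A + μ.real B - 2 * μ.real (A ∩ B) - 2 * c * (μ.real A - μ.real B)
        + c ^ 2 * μ.real univ := by
  have hAB := hA.inter hB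
  simp_rw [sq_indicator_sub_indicator_sub_const]
  rw [integral_add _ (integrable_const _), integral_sub, integral_add, integral_const_mul,
    integral_const_mul, integral_const_mul, integral_indicator_one hA, integral_indicator_one hB,
    integral_indicator_one hAB, integral_const, smul_eq_mul]
  · ring
  all_goals fun_prop (disch := assumption)

end Indicator

section PartSum

variable {d : ℕ} {x : Fin d → ℝ}

lemma partSum_succ (x : Fin d → ℝ) (i : Fin d) :
    partSum x ((i : ℕ) + 1) = partSum x i + x i := by
  have hfilter : Finset.univ.filter (fun j : Fin d => (j : ℕ) < i + 1)
      = insert i (Finset.univ.filter (fun j : Fin d => (j : ℕ) < i)) := by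
    ext j
    simp only [Finset.mem_filter, Finset.mem_univ, true_and, Finset.mem_insert, Fin.ext_iff]
    omega
  rw [partSum, hfilter, Finset.sum_insert (by simp), add_comm, partSum]

lemma partSum_self (x : Fin d → ℝ) : partSum x d = ∑ j, x j := by
  rw [partSum, Finset.filter_true_of_mem fun j _ => j.isLt]

lemma partSum_nonneg (hx : 0 ≤ x) (i : ℕ) : 0 ≤ partSum x i :=
  Finset.sum_nonneg fun j _ => hx j

lemma partSum_mono (hx : 0 ≤ x) : Monotone (partSum x) := fun _ _ hmn =>
  Finset.sum_le_sum_of_subset_of_nonneg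
    (fun j hj => by simp only [Finset.mem_filter] at hj ⊢; exact ⟨hj.1, hj.2.trans_le hmn⟩)
    fun j _ _ => hx j

lemma volume_real_Ioc_partSum {i : Fin d} (hxi : 0 ≤ x i) :
    volume.real (Ioc (partSum x i) (partSum x (i + 1))) = x i := by
  rw [partSum_succ, Real.volume_real_Ioc_of_le (le_add_of_nonneg_right hxi), add_sub_cancel_left]

lemma Ioc_partSum_subset (hx : x ∈ stdSimplex ℝ (Fin d)) (i : Fin d) :
    Ioc (partSum x i) (partSum x (i + 1)) ⊆ Ioc 0 1 :=
  Ioc_subset_Ioc (partSum_nonneg hx.1 _)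
    ((partSum_mono hx.1 i.isLt).trans_eq ((partSum_self x).trans hx.2))

end PartSum

section Psi

variable {d : ℕ} {x y : Fin d → ℝ}

lemma Psi_sub_Psi (x y : Fin d → ℝ) (u : ℝ) (i : Fin d) :
    Psi x u i - Psi y u i
      = (Ioc (partSum x i) (partSum x (i + 1))).indicator 1 u
        - (Ioc (partSum y i) (partSum y (i + 1))).indicator 1 u - (x i - y i) := by
  simp only [Psi, indicator_apply, Pi.one_apply]
  ring

lemma integrable_sq_Psi_sub_Psi (x y : Fin d → ℝ) (i : Fin d) :
    Integrable (fun u => (Psi x u i - Psi y u i) ^ 2) (volume.restrict (Ioc 0 1)) := by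
  simp_rw [Psi_sub_Psi]
  exact integrable_sq_indicator_sub_indicator_sub_const measurableSet_Ioc measurableSet_Ioc _

lemma integral_sq_Psi_sub_Psi (hx : x ∈ stdSimplex ℝ (Fin d)) (hy : y ∈ stdSimplex ℝ (Fin d))
    (i : Fin d) :
    ∫ u in Ioc 0 1, (Psi x u i - Psi y u i) ^ 2
      = x i + y i - (x i - y i) ^ 2
        - 2 * volume.real (Ioc (partSum x i) (partSum x (i + 1))
          ∩ Ioc (partSum y i) (partSum y (i + 1))) := by
  have hxi := Ioc_partSum_subset hx i
  have hyi := Ioc_partSum_subset hy i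
  simp_rw [Psi_sub_Psi]
  rw [integral_sq_indicator_sub_indicator_sub_const measurableSet_Ioc measurableSet_Ioc,
    measureReal_restrict_apply measurableSet_Ioc, measureReal_restrict_apply measurableSet_Ioc,
    measureReal_restrict_apply (measurableSet_Ioc.inter measurableSet_Ioc),
    measureReal_restrict_apply_univ, inter_eq_left.2 hxi, inter_eq_left.2 hyi,
    inter_eq_left.2 (inter_subset_left.trans hxi), volume_real_Ioc_partSum (hx.1 i),
    volume_real_Ioc_partSum (hy.1 i), Real.volume_real_Ioc_of_le zero_le_one]
  ring

end Psi

theorem integral_sq_norm_Psi_sub_general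
    (d : ℕ) (x y : Fin d → ℝ)
    (hx : x ∈ stdSimplex ℝ (Fin d)) (hy : y ∈ stdSimplex ℝ (Fin d)) :
    ∫ u in (0:ℝ)..1, (∑ i, (Psi x u i - Psi y u i) ^ 2)
      = 2 - (∑ i, (x i - y i) ^ 2)
        - 2 * ∑ i : Fin d,
            (MeasureTheory.volume
              (Set.Ioc (partSum x (i : ℕ)) (partSum x ((i : ℕ) + 1))
                ∩ Set.Ioc (partSum y (i : ℕ)) (partSum y ((i : ℕ) + 1)))).toReal := by
  rw [intervalIntegral.integral_of_le zero_le_one,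
    integral_finsetSum _ fun i _ => integrable_sq_Psi_sub_Psi x y i]
  simp only [integral_sq_Psi_sub_Psi hx hy, Finset.sum_sub_distrib, Finset.sum_add_distrib,
    ← Finset.mul_sum, hx.2, hy.2, measureReal_def]
  ring

/-- For `x, y` in the simplex `S_d`,
`∫₀¹ ‖Ψ(u,x) − Ψ(u,y)‖₂² du
  = 2 − ‖x − y‖₂² − 2 ∑_i Leb((S_{i−1}^x, S_i^x] ∩ (S_{i−1}^y, S_i^y])`. -/
theorem integral_sq_norm_Psi_sub
    (d : ℕ) (hd : 1 ≤ d) (x y : Fin d → ℝ)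
    (hx : x ∈ stdSimplex ℝ (Fin d)) (hy : y ∈ stdSimplex ℝ (Fin d)) :
    ∫ u in (0:ℝ)..1, (∑ i, (Psi x u i - Psi y u i) ^ 2)
      = 2 - (∑ i, (x i - y i) ^ 2)
        - 2 * ∑ i : Fin d,
            (MeasureTheory.volume
              (Set.Ioc (partSum x (i : ℕ)) (partSum x ((i : ℕ) + 1))
                ∩ Set.Ioc (partSum y (i : ℕ)) (partSum y ((i : ℕ) + 1)))).toReal :=
  integral_sq_norm_Psi_sub_general d x y hx hy
end

section
/- Let d ≥ 1 and let x, y ∈ S_d have all coordinates strictly positive. Suppose for each n ∈ ℕ a vector of counts k⁽ⁿ⁾ ∈ ℕ^d is given with Σ_{i=1}^d k_i⁽ⁿ⁾ = n and k_i⁽ⁿ⁾ / n → x_i as n → ∞ for each i. Then lim_{n→∞} (1/n) log( (n! / (k₁⁽ⁿ⁾! ⋯ k_d⁽ⁿ⁾!)) ∏_{i=1}^d y_i^{k_i⁽ⁿ⁾} ) = − Σ_{i=1}^d x_i log( x_i / y_i ) = − KL(x, y). -/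
open MeasureTheory Filter

noncomputable def stirF (n : ℕ) : ℝ := Real.log n.factorial - ((n : ℝ) * Real.log n - n)

lemma stirF_div_tendsto : Tendsto (fun n : ℕ => stirF n / n) atTop (nhds 0) := by
  have h1 : Tendsto (fun n : ℕ => Real.log (Stirling.stirlingSeq n) / n) atTop (nhds 0) := by
    have := (Stirling.tendsto_stirlingSeq_sqrt_pi.log (by positivity)).div_atTop
      tendsto_natCast_atTop_atTop
    exact this
  have h2 : Tendsto (fun n : ℕ => Real.log (2 * n) / (2 * (n:ℝ))) atTop (nhds 0) := by
    exact (Real.isLittleO_log_id_atTop.tendsto_div_nhds_zero).comp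
      (tendsto_natCast_atTop_atTop.const_mul_atTop two_pos)
  have h2' : Tendsto (fun n : ℕ => (1/2) * Real.log (2 * n) / n) atTop (nhds 0) := by
    have := h2.const_mul (1 : ℝ)
    rw [mul_zero] at this
    refine this.congr' ?_
    filter_upwards [eventually_ge_atTop 1] with n hn
    have : (n:ℝ) ≠ 0 := by positivity
    field_simp
  have := h1.add h2'
  rw [add_zero] at this
  refine this.congr' ?_
  filter_upwards [eventually_ge_atTop 1] with n hn
  have hn0 : (0:ℝ) < n := by exact_mod_cast hn
  have hform := Stirling.log_stirlingSeq_formula n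
  have hlogne : Real.log ((n:ℝ) / Real.exp 1) = Real.log n - 1 := by
    rw [Real.log_div (by positivity) (Real.exp_ne_zero 1), Real.log_exp]
  rw [hlogne] at hform
  have : stirF n = Real.log (Stirling.stirlingSeq n) + 1/2 * Real.log (2 * n) := by
    rw [hform, stirF]; ring
  rw [this]; ring


/-- Large-deviation limit of multinomial probabilities: if the empirical frequencies
`k⁽ⁿ⁾/n` converge to `x` in the interior of the simplex, then
`(1/n) log( (n!/∏ k_i⁽ⁿ⁾!) ∏ y_i^{k_i⁽ⁿ⁾} ) → −∑ x_i log(x_i / y_i) = −KL(x, y)`. -/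
theorem multinomial_log_likelihood_tendsto_neg_KL
    (d : ℕ) (hd : 1 ≤ d) (x y : Fin d → ℝ)
    (hx : x ∈ stdSimplex ℝ (Fin d)) (hy : y ∈ stdSimplex ℝ (Fin d))
    (hxpos : ∀ i, 0 < x i) (hypos : ∀ i, 0 < y i)
    (k : ℕ → Fin d → ℕ)
    (hk : ∀ n, ∑ i, k n i = n)
    (hfreq : ∀ i, Tendsto (fun n => (k n i : ℝ) / n) atTop (nhds (x i))) :
    Tendsto
      (fun n : ℕ => (1 / (n : ℝ)) *
        Real.log (((n.factorial : ℝ) / ∏ i, ((k n i).factorial : ℝ))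
          * ∏ i, (y i) ^ (k n i)))
      atTop (nhds (-(∑ i, x i * Real.log (x i / y i)))) := by
  -- eventually all k n i ≥ 1 and n ≥ 1
  have hev : ∀ᶠ n in atTop, 1 ≤ n ∧ ∀ i, 1 ≤ k n i := by
    have h1 : ∀ i, ∀ᶠ n in atTop, 1 ≤ k n i := by
      intro i
      have := (hfreq i).eventually (lt_mem_nhds (hxpos i))
      filter_upwards [this, eventually_ge_atTop 1] with n hn hn1
      by_contra h
      push_neg at h
      interval_cases h' : k n i
      · simp at hn
    filter_upwards [eventually_ge_atTop 1, eventually_all.2 h1] with n h h' using ⟨h, h'⟩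
  -- k n i → ∞
  have hktop : ∀ i, Tendsto (fun n => k n i) atTop atTop := by
    intro i
    rw [← tendsto_natCast_atTop_iff (R := ℝ)]
    have : Tendsto (fun n : ℕ => ((k n i : ℝ) / n) * n) atTop atTop :=
      Tendsto.pos_mul_atTop (hxpos i) (hfreq i) tendsto_natCast_atTop_atTop
    refine this.congr' ?_
    filter_upwards [eventually_ge_atTop 1] with n hn
    have : (n:ℝ) ≠ 0 := by positivity
    field_simp
  -- stirF (k n i) / n → 0
  have hstirk : ∀ i, Tendsto (fun n : ℕ => stirF (k n i) / n) atTop (nhds 0) := by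
    intro i
    have h1 : Tendsto (fun n : ℕ => stirF (k n i) / (k n i : ℝ)) atTop (nhds 0) :=
      stirF_div_tendsto.comp (hktop i)
    have := h1.mul (hfreq i)
    rw [zero_mul] at this
    refine this.congr' ?_
    filter_upwards [hev] with n ⟨hn1, hki⟩
    have hki0 : ((k n i : ℝ)) ≠ 0 := by
      have := hki i; positivity
    field_simp
  -- first part: (stirF n - ∑ stirF (k n i))/n → 0
  have hT1 : Tendsto (fun n : ℕ => (stirF n - ∑ i, stirF (k n i)) / n) atTop (nhds 0) := by
    have hsum : Tendsto (fun n : ℕ => ∑ i, stirF (k n i) / n) atTop (nhds 0) := by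
      have := tendsto_finset_sum Finset.univ (fun i _ => hstirk i)
      simpa using this
    have := stirF_div_tendsto.sub hsum
    rw [sub_zero] at this
    refine this.congr ?_
    intro n
    rw [sub_div, Finset.sum_div]
  -- second part
  have hT2 : Tendsto (fun n : ℕ => ∑ i, ((k n i : ℝ)/n * Real.log (y i)
      - (k n i : ℝ)/n * Real.log ((k n i : ℝ)/n))) atTop
      (nhds (∑ i, (x i * Real.log (y i) - x i * Real.log (x i)))) := by
    refine tendsto_finset_sum Finset.univ (fun i _ => ?_)
    exact ((hfreq i).mul_const _).sub ((hfreq i).mul ((hfreq i).log (hxpos i).ne'))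
  have hlim := hT1.add hT2
  rw [zero_add] at hlim
  have htarget : (∑ i, (x i * Real.log (y i) - x i * Real.log (x i)))
      = -(∑ i, x i * Real.log (x i / y i)) := by
    rw [← Finset.sum_neg_distrib]
    refine Finset.sum_congr rfl fun i _ => ?_
    rw [Real.log_div (hxpos i).ne' (hypos i).ne']
    ring
  rw [htarget] at hlim
  refine hlim.congr' ?_
  filter_upwards [hev] with n ⟨hn1, hki⟩
  have hn0 : (0:ℝ) < n := by exact_mod_cast hn1
  have hkpos : ∀ i, (0:ℝ) < (k n i : ℝ) := fun i => by exact_mod_cast hki i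
  have hfacpos : ∀ i, (0:ℝ) < ((k n i).factorial : ℝ) := fun i => by
    exact_mod_cast (k n i).factorial_pos
  -- expand the log
  have hlog : Real.log (((n.factorial : ℝ) / ∏ i, ((k n i).factorial : ℝ))
      * ∏ i, (y i) ^ (k n i))
      = Real.log (n.factorial : ℝ) - ∑ i, Real.log ((k n i).factorial : ℝ)
        + ∑ i, (k n i : ℝ) * Real.log (y i) := by
    rw [Real.log_mul, Real.log_div, Real.log_prod, Real.log_prod]
    · congr 1
      refine Finset.sum_congr rfl fun i _ => ?_
      rw [Real.log_pow]
    · intro i _; exact (pow_pos (hypos i) _).ne'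
    · intro i _; exact (hfacpos i).ne'
    · positivity
    · exact (Finset.prod_pos fun i _ => hfacpos i).ne'
    · refine div_ne_zero ?_ (Finset.prod_pos fun i _ => hfacpos i).ne'
      positivity
    · exact (Finset.prod_pos fun i _ => pow_pos (hypos i) _).ne'
  have hsumk : (∑ i, (k n i : ℝ)) = (n : ℝ) := by exact_mod_cast hk n
  -- main algebraic identity
  have key : Real.log (n.factorial : ℝ) - ∑ i, Real.log ((k n i).factorial : ℝ)
        + ∑ i, (k n i : ℝ) * Real.log (y i)
      = (stirF n - ∑ i, stirF (k n i))
        + ∑ i, ((k n i : ℝ) * Real.log (y i) - (k n i : ℝ) * Real.log ((k n i : ℝ)/n)) := by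
    have expand : ∀ i, stirF (k n i) = Real.log ((k n i).factorial : ℝ)
        - ((k n i : ℝ) * Real.log (k n i) - (k n i : ℝ)) := fun i => rfl
    have hlogdiv : ∀ i, Real.log ((k n i : ℝ)/n) = Real.log (k n i) - Real.log n :=
      fun i => Real.log_div (hkpos i).ne' hn0.ne'
    simp only [expand, hlogdiv, stirF]
    rw [Finset.sum_sub_distrib, Finset.sum_sub_distrib, Finset.sum_sub_distrib]
    have e1 : ∑ i, (k n i : ℝ) * (Real.log (k n i) - Real.log n)
        = (∑ i, (k n i : ℝ) * Real.log (k n i)) - (∑ i, (k n i : ℝ)) * Real.log n := by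
      rw [Finset.sum_mul, ← Finset.sum_sub_distrib]
      exact Finset.sum_congr rfl fun i _ => by ring
    rw [e1, hsumk]
    ring
  have goal : (stirF n - ∑ i, stirF (k n i)) / (n:ℝ) +
      ∑ i, ((k n i : ℝ)/n * Real.log (y i) - (k n i : ℝ)/n * Real.log ((k n i : ℝ)/n))
      = (1 / (n:ℝ)) * Real.log (((n.factorial : ℝ) / ∏ i, ((k n i).factorial : ℝ))
          * ∏ i, (y i) ^ (k n i)) := by
    rw [hlog, key, one_div, inv_mul_eq_div, add_div, Finset.sum_div]
    congr 1
    refine Finset.sum_congr rfl fun i _ => ?_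
    field_simp
  exact goal
end

section
/- Let d ≥ 2, let Δ = { y ∈ ℝ^{d−1} : y_i ≥ 0 for all i, Σ_{i=1}^{d−1} y_i ≤ 1 }, and for y ∈ Δ write y_d := 1 − Σ_{i=1}^{d−1} y_i. For counts k ∈ ℕ^d with Σ_{i=1}^d k_i = n, define the multinomial probability q(k; y) = (n! / ∏_{i=1}^d k_i!) ∏_{i=1}^d y_i^{k_i}. Suppose x ∈ Δ has x_i > 0 for all i ≤ d−1 and x_d = 1 − Σ_{i<d} x_i > 0, and suppose k⁽ⁿ⁾ ∈ ℕ^d satisfies Σ_i k_i⁽ⁿ⁾ = n and k_i⁽ⁿ⁾ / n → x_i for all i ∈ {1,…,d}. Then for all continuous functions F, G : Δ → ℝ with F ≥ 0 on Δ and G > 0 on Δ, lim_{n→∞} ( ∫_Δ q(k⁽ⁿ⁾; y) F(y) dy ) / ( ∫_Δ q(k⁽ⁿ⁾; y) G(y) dy ) = F(x) / G(x), where dy denotes (d−1)-dimensional Lebesgue measure on Δ. -/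
/-!
Write `p(y) = probExt d y`, `x̄ = p(x)` and `Pₙ(y) = ∏ᵢ pᵢ(y) ^ kᵢ⁽ⁿ⁾ = Ψ(k⁽ⁿ⁾/n, p(y)) ^ n`, where
`Ψ(t, p) = ∏ᵢ pᵢ ^ tᵢ` is jointly continuous where `t > 0`. By Gibbs' inequality `Ψ(x̄, ·)` attains
its maximum on the probability simplex only at `x̄`; by compactness, for every neighbourhood `U`
of `x` there are `c₁ < c₂` such that, for all `t` near `x̄`, `Ψ(t, p(·)) ≤ c₁` on `Δ \ U` and
`Ψ(t, p(·)) ≥ c₂` near `x`. Hence `∫_{Δ \ U} Pₙ = O((c₁ / c₂) ^ n) ∫_Δ Pₙ`: the normalised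
measures `Pₙ dy / ∫_Δ Pₙ` concentrate at `x`, and the `F`- and `G`-averages tend to `F x`, `G x`.
-/

open MeasureTheory Filter

/-- Extension of `y ∈ Δ ⊆ ℝ^{d−1}` to a probability vector in `ℝ^d`, with last
coordinate `y_d = 1 − ∑_{i<d} y_i`. -/
noncomputable def probExt (d : ℕ) (y : Fin (d - 1) → ℝ) : Fin d → ℝ :=
  fun i => if h : (i : ℕ) < d - 1 then y ⟨i, h⟩ else 1 - ∑ j, y j

/-- The multinomial probability `q(k; y) = (n!/∏ kᵢ!) ∏ yᵢ^{kᵢ}` of counts `k` with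
`∑ kᵢ = n` under success probabilities `y`. -/
noncomputable def multinomialProb {d : ℕ} (n : ℕ) (k : Fin d → ℕ) (y : Fin d → ℝ) : ℝ :=
  ((n.factorial : ℝ) / ∏ i, ((k i).factorial : ℝ)) * ∏ i, (y i) ^ (k i)

open Set Finset Topology

section Concentration

variable {α : Type*} [MeasurableSpace α] {μ : Measure α}

lemma measureReal_mul_setIntegral_le {f : α → ℝ} {K O : Set α} {c : ℝ}
    (hK : MeasurableSet K) (hO : MeasurableSet O) (hμK : μ K ≠ ⊤) (hμO : μ O ≠ ⊤)
    (hfK : IntegrableOn f K μ) (hfO : IntegrableOn f O μ)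
    (hle : ∀ y ∈ K, ∀ z ∈ O, f y ≤ c * f z) :
    μ.real O * ∫ y in K, f y ∂μ ≤ μ.real K * (c * ∫ z in O, f z ∂μ) := by
  have hpt : ∀ y ∈ K, μ.real O * f y ≤ c * ∫ z in O, f z ∂μ := fun y hy =>
    calc μ.real O * f y = ∫ _ in O, f y ∂μ := by rw [setIntegral_const, smul_eq_mul]
      _ ≤ ∫ z in O, c * f z ∂μ :=
        setIntegral_mono_on (integrableOn_const hμO) (hfO.const_mul c) hO (hle y hy)
      _ = c * ∫ z in O, f z ∂μ := integral_const_mul c _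
  calc μ.real O * ∫ y in K, f y ∂μ = ∫ y in K, μ.real O * f y ∂μ :=
        (integral_const_mul _ _).symm
    _ ≤ ∫ _ in K, c * ∫ z in O, f z ∂μ ∂μ :=
        setIntegral_mono_on (hfK.const_mul _) (integrableOn_const hμK) hK hpt
    _ = μ.real K * (c * ∫ z in O, f z ∂μ) := by rw [setIntegral_const, smul_eq_mul]

lemma setIntegral_pos_of_pos_on {f : α → ℝ} {s O : Set α} (hs : MeasurableSet s)
    (hf : ∀ y ∈ s, 0 ≤ f y) (hfi : IntegrableOn f s μ) (hOs : O ⊆ s) (hμO : μ O ≠ 0)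
    (hfO : ∀ y ∈ O, 0 < f y) : 0 < ∫ y in s, f y ∂μ := by
  rw [setIntegral_pos_iff_support_of_nonneg_ae ((ae_restrict_iff' hs).2 (ae_of_all _ hf)) hfi]
  exact (pos_iff_ne_zero.2 hμO).trans_le (measure_mono fun y hy => ⟨(hfO y hy).ne', hOs hy⟩)

theorem tendsto_setIntegral_div_setIntegral_of_le_pow_mul {P : ℕ → α → ℝ} {s K O : Set α}
    (hs : MeasurableSet s) (hK : MeasurableSet K) (hO : MeasurableSet O) (hKs : K ⊆ s)
    (hOs : O ⊆ s) (hμK : μ K ≠ ⊤) (hμO₀ : μ O ≠ 0) (hμO : μ O ≠ ⊤)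
    (hP : ∀ n, ∀ y ∈ s, 0 ≤ P n y) (hPi : ∀ n, IntegrableOn (P n) s μ)
    {r : ℝ} (hr₀ : 0 ≤ r) (hr₁ : r < 1)
    (hdom : ∀ᶠ n in atTop, ∀ y ∈ K, ∀ z ∈ O, P n y ≤ r ^ n * P n z) :
    Tendsto (fun n => (∫ y in K, P n y ∂μ) / ∫ y in s, P n y ∂μ) atTop (𝓝 0) := by
  have hO_pos : 0 < μ.real O := ENNReal.toReal_pos hμO₀ hμO
  have hlim : Tendsto (fun n : ℕ => r ^ n * (μ.real K / μ.real O)) atTop (𝓝 0) := by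
    simpa using (tendsto_pow_atTop_nhds_zero_of_lt_one hr₀ hr₁).mul_const (μ.real K / μ.real O)
  refine tendsto_of_tendsto_of_tendsto_of_le_of_le' tendsto_const_nhds hlim
    (Eventually.of_forall fun n => div_nonneg
      (setIntegral_nonneg hK fun y hy => hP n y (hKs hy)) (setIntegral_nonneg hs (hP n))) ?_
  filter_upwards [hdom] with n hn
  have hOS : ∫ y in O, P n y ∂μ ≤ ∫ y in s, P n y ∂μ :=
    setIntegral_mono_set (hPi n) ((ae_restrict_iff' hs).2 (ae_of_all _ (hP n))) hOs.eventuallyLE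
  have key := measureReal_mul_setIntegral_le hK hO hμK hμO ((hPi n).mono_set hKs)
    ((hPi n).mono_set hOs) hn
  refine div_le_of_le_mul₀ (setIntegral_nonneg hs (hP n)) (by positivity) ?_
  calc ∫ y in K, P n y ∂μ ≤ μ.real K * (r ^ n * ∫ y in O, P n y ∂μ) / μ.real O := by
        rw [le_div_iff₀ hO_pos]; linarith
    _ ≤ μ.real K * (r ^ n * ∫ y in s, P n y ∂μ) / μ.real O := by gcongr
    _ = r ^ n * (μ.real K / μ.real O) * ∫ y in s, P n y ∂μ := by ring

lemma abs_setIntegral_mul_sub_le {P H : α → ℝ} {s U : Set α} (hs : MeasurableSet s)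
    (hU : MeasurableSet U) (hP : ∀ y ∈ s, 0 ≤ P y) (hPi : IntegrableOn P s μ)
    (hPHi : IntegrableOn (fun y => P y * H y) s μ) {a ε M : ℝ}
    (hnear : ∀ y ∈ s ∩ U, |H y - a| ≤ ε) (hfar : ∀ y ∈ s, |H y - a| ≤ M) :
    |∫ y in s, P y * H y ∂μ - a * ∫ y in s, P y ∂μ| ≤
      ε * ∫ y in s ∩ U, P y ∂μ + M * ∫ y in s \ U, P y ∂μ := by
  have hsub : ∫ y in s, P y * H y ∂μ - a * ∫ y in s, P y ∂μ =
      ∫ y in s, P y * (H y - a) ∂μ := by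
    simp_rw [mul_sub]
    rw [integral_sub hPHi (hPi.mul_const a), integral_mul_const, mul_comm]
  have hint : IntegrableOn (fun y => |P y * (H y - a)|) s μ := by
    simp_rw [mul_sub]; exact (hPHi.sub (hPi.mul_const a)).abs
  have hpt : ∀ y ∈ s, |P y * (H y - a)| = |H y - a| * P y := fun y hy => by
    rw [abs_mul, abs_of_nonneg (hP y hy), mul_comm]
  rw [hsub, ← integral_const_mul, ← integral_const_mul]
  calc |∫ y in s, P y * (H y - a) ∂μ| ≤ ∫ y in s, |P y * (H y - a)| ∂μ :=
        abs_integral_le_integral_abs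
    _ = ∫ y in s ∩ U, |P y * (H y - a)| ∂μ + ∫ y in s \ U, |P y * (H y - a)| ∂μ :=
        (integral_inter_add_sdiff hU hint).symm
    _ ≤ ∫ y in s ∩ U, ε * P y ∂μ + ∫ y in s \ U, M * P y ∂μ := by
        refine add_le_add ?_ ?_
        · refine setIntegral_mono_on (hint.mono_set inter_subset_left)
            ((hPi.mono_set inter_subset_left).const_mul ε) (hs.inter hU) fun y hy => ?_
          rw [hpt y hy.1]; exact mul_le_mul_of_nonneg_right (hnear y hy) (hP y hy.1)
        · refine setIntegral_mono_on (hint.mono_set sdiff_subset)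
            ((hPi.mono_set sdiff_subset).const_mul M) (hs.diff hU) fun y hy => ?_
          rw [hpt y hy.1]; exact mul_le_mul_of_nonneg_right (hfar y hy.1) (hP y hy.1)

theorem tendsto_setIntegral_mul_div_setIntegral [TopologicalSpace α] [OpensMeasurableSpace α]
    {P : ℕ → α → ℝ} {H : α → ℝ} {s : Set α} {x : α} {M : ℝ} (hs : MeasurableSet s)
    (hP : ∀ n, ∀ y ∈ s, 0 ≤ P n y) (hPi : ∀ n, IntegrableOn (P n) s μ)
    (hPHi : ∀ n, IntegrableOn (fun y => P n y * H y) s μ)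
    (hH : ContinuousWithinAt H s x) (hM : ∀ y ∈ s, |H y - H x| ≤ M)
    (hpos : ∀ᶠ n in atTop, 0 < ∫ y in s, P n y ∂μ)
    (hconc : ∀ U, IsOpen U → x ∈ U →
      Tendsto (fun n => (∫ y in s \ U, P n y ∂μ) / ∫ y in s, P n y ∂μ) atTop (𝓝 0)) :
    Tendsto (fun n => (∫ y in s, P n y * H y ∂μ) / ∫ y in s, P n y ∂μ) atTop (𝓝 (H x)) := by
  rw [Metric.tendsto_nhds]
  intro ε hε
  obtain ⟨U, hUo, hxU, hU⟩ :=
    mem_nhdsWithin.1 (hH (Metric.closedBall_mem_nhds (H x) (half_pos hε)))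
  have hnear : ∀ y ∈ s ∩ U, |H y - H x| ≤ ε / 2 := fun y hy => hU ⟨hy.2, hy.1⟩
  have hfar : ∀ᶠ n in atTop, M * ((∫ y in s \ U, P n y ∂μ) / ∫ y in s, P n y ∂μ) < ε / 2 :=
    ((hconc U hUo hxU).const_mul M).eventually (gt_mem_nhds (by simpa using half_pos hε))
  filter_upwards [hpos, hfar] with n hS hfarn
  have key := abs_setIntegral_mul_sub_le hs hUo.measurableSet (hP n) (hPi n) (hPHi n)
    hnear hM
  have hsU : ∫ y in s ∩ U, P n y ∂μ ≤ ∫ y in s, P n y ∂μ :=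
    setIntegral_mono_set (hPi n) ((ae_restrict_iff' hs).2 (ae_of_all _ (hP n)))
      inter_subset_left.eventuallyLE
  rw [mul_div_assoc', div_lt_iff₀ hS] at hfarn
  have hnear_le := mul_le_mul_of_nonneg_left hsU (half_pos hε).le
  rw [Real.dist_eq, div_sub' hS.ne', abs_div, abs_of_pos hS, div_lt_iff₀ hS, mul_comm]
  linarith

end Concentration

section ProbabilityVectors

variable {ι : Type*} [Fintype ι]

theorem prod_rpow_lt_prod_rpow_self_of_ne {p q : ι → ℝ} (hp : p ∈ stdSimplex ℝ ι)
    (hq : ∀ i, 0 < q i) (hq₁ : ∑ i, q i = 1) (hpq : p ≠ q) :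
    ∏ i, p i ^ q i < ∏ i, q i ^ q i := by
  have hmean : ∑ i, q i * (p i / q i) = 1 := by
    simp_rw [mul_div_cancel₀ _ (hq _).ne']; exact hp.2
  have hlt : ∏ i, (p i / q i) ^ q i < ∑ i, q i * (p i / q i) := by
    refine (Real.geom_mean_lt_arith_mean_weighted_iff_of_pos' univ q _ (fun i _ => hq i) hq₁
      fun i _ => div_nonneg (hp.1 i) (hq i).le).2 ?_
    obtain ⟨j, hj⟩ := Function.ne_iff.1 hpq
    exact ⟨j, mem_univ j, by rwa [hmean, ne_eq, div_eq_one_iff_eq (hq j).ne']⟩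
  rw [hmean] at hlt
  simp_rw [Real.div_rpow (hp.1 _) (hq _).le, prod_div_distrib] at hlt
  exact (div_lt_one (prod_pos fun i _ => Real.rpow_pos_of_pos (hq i) _)).1 hlt

lemma prod_pow_eq_prod_rpow_div_pow {p : ι → ℝ} (hp : ∀ i, 0 ≤ p i) (k : ι → ℕ) {n : ℕ}
    (hn : n ≠ 0) : ∏ i, p i ^ k i = (∏ i, p i ^ ((k i : ℝ) / n)) ^ n := by
  rw [← Finset.prod_pow]
  refine prod_congr rfl fun i _ => ?_
  rw [← Real.rpow_mul_natCast (hp i), div_mul_cancel₀ _ (Nat.cast_ne_zero.2 hn),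
    Real.rpow_natCast]

lemma continuousAt_prod_rpow {t p : ι → ℝ} (ht : ∀ i, 0 < t i) :
    ContinuousAt (fun z : (ι → ℝ) × (ι → ℝ) => ∏ i, z.2 i ^ z.1 i) (t, p) :=
  tendsto_finsetProd _ fun i _ =>
    ((continuous_apply i).comp continuous_snd).continuousAt.rpow
      ((continuous_apply i).comp continuous_fst).continuousAt (Or.inr (ht i))

theorem exists_prod_pow_le_pow_mul_prod_pow {q : ι → ℝ} (hq : ∀ i, 0 < q i)
    (hq₁ : ∑ i, q i = 1) {k : ℕ → ι → ℕ}
    (hk : Tendsto (fun n i => (k n i : ℝ) / n) atTop (𝓝 q))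
    {K : Set (ι → ℝ)} (hK : IsCompact K) (hKs : K ⊆ stdSimplex ℝ ι) (hqK : q ∉ K) :
    ∃ r, 0 ≤ r ∧ r < 1 ∧ ∃ V, IsOpen V ∧ q ∈ V ∧ ∀ᶠ n in atTop, ∀ p ∈ K,
      ∀ p' ∈ V ∩ stdSimplex ℝ ι, ∏ i, p i ^ k n i ≤ r ^ n * ∏ i, p' i ^ k n i := by
  set Ψ : (ι → ℝ) × (ι → ℝ) → ℝ := fun z => ∏ i, z.2 i ^ z.1 i
  have hΨ : ∀ p, ContinuousAt Ψ (q, p) := fun p => continuousAt_prod_rpow hq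
  have hΨ_nonneg : ∀ t, ∀ p ∈ stdSimplex ℝ ι, 0 ≤ Ψ (t, p) := fun t p hp =>
    prod_nonneg fun i _ => Real.rpow_nonneg (hp.1 i) _
  have hA : 0 < Ψ (q, q) := prod_pos fun i _ => Real.rpow_pos_of_pos (hq i) _
  -- Gibbs' inequality, made uniform over `K` by compactness (`exists_forall_le'` in `ℝᵒᵈ`).
  obtain ⟨a, haA, ha⟩ : ∃ a < Ψ (q, q), ∀ p ∈ K, Ψ (q, p) ≤ a :=
    hK.exists_forall_le' (α := ℝᵒᵈ)
      (fun p _ => ((hΨ p).comp (Continuous.prodMk_right q).continuousAt).continuousWithinAt)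
      fun p hp => prod_rpow_lt_prod_rpow_self_of_ne (hKs hp) hq hq₁ (ne_of_mem_of_not_mem hp hqK)
  obtain ⟨c₁, hac₁, hc₁A⟩ := exists_between (max_lt haA hA)
  obtain ⟨c₂, hc₁₂, hc₂A⟩ := exists_between hc₁A
  have hc₁ : 0 < c₁ := (le_max_right a 0).trans_lt hac₁
  have htube : ∀ᶠ t in 𝓝 q, ∀ p ∈ K, Ψ (t, p) < c₁ :=
    hK.eventually_forall_of_forall_eventually fun p hp =>
      (hΨ p).eventually (gt_mem_nhds (((ha p hp).trans (le_max_left a 0)).trans_lt hac₁))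
  obtain ⟨T, V, hT, hqT, hV, hqV, hTV⟩ :=
    mem_nhds_prod_iff'.1 ((hΨ q).eventually (lt_mem_nhds hc₂A))
  have hc₂ : 0 < c₂ := hc₁.trans hc₁₂
  refine ⟨c₁ / c₂, by positivity, (div_lt_one hc₂).2 hc₁₂, V, hV, hqV, ?_⟩
  filter_upwards [hk.eventually (htube.and (hT.mem_nhds hqT)), eventually_ne_atTop 0]
    with n ⟨hfar, hnear⟩ hn p hp p' hp'
  rw [prod_pow_eq_prod_rpow_div_pow (hKs hp).1 _ hn,
    prod_pow_eq_prod_rpow_div_pow hp'.2.1 _ hn]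
  calc Ψ (_, p) ^ n ≤ c₁ ^ n := pow_le_pow_left₀ (hΨ_nonneg _ p (hKs hp)) (hfar p hp).le n
    _ = (c₁ / c₂) ^ n * c₂ ^ n := by
        rw [div_pow, div_mul_cancel₀ _ (pow_ne_zero _ hc₂.ne')]
    _ ≤ (c₁ / c₂) ^ n * Ψ (_, p') ^ n := by
        gcongr ?_ * ?_ ^ n
        exact (hTV (mk_mem_prod hnear hp'.1)).le

end ProbabilityVectors

/-- The paper's `Δ`. -/
def cornerSimplex (m : ℕ) : Set (Fin m → ℝ) := {y | (∀ i, 0 ≤ y i) ∧ ∑ i, y i ≤ 1}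

lemma isCompact_cornerSimplex (m : ℕ) : IsCompact (cornerSimplex m) := by
  have hclosed : IsClosed (cornerSimplex m) := by
    simp only [cornerSimplex, ofPred_and, ofPred_forall]
    exact (isClosed_iInter fun i => isClosed_le continuous_const (continuous_apply i)).inter
      (isClosed_le (continuous_finsetSum _ fun i _ => continuous_apply i) continuous_const)
  refine (isCompact_Icc (a := 0) (b := 1)).of_isClosed_subset hclosed
    fun y hy => ⟨hy.1, fun i => ?_⟩
  exact (single_le_sum (fun j _ => hy.1 j) (mem_univ i)).trans hy.2

section ProbExt

variable {d : ℕ}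

lemma continuous_probExt : Continuous (probExt d) :=
  continuous_pi fun i => by
    unfold probExt
    split
    · exact continuous_apply _
    · exact continuous_const.sub (continuous_finsetSum _ fun j _ => continuous_apply j)

lemma probExt_injective : Function.Injective (probExt d) := fun y z h => funext fun i => by
  simpa [probExt] using congrFun h ⟨i, by omega⟩

lemma sum_probExt (hd : 1 ≤ d) (y : Fin (d - 1) → ℝ) : ∑ i, probExt d y i = 1 := by
  obtain ⟨m, rfl⟩ : ∃ m, d = m + 1 := ⟨d - 1, by omega⟩
  simp [Fin.sum_univ_castSucc, probExt]

lemma mem_cornerSimplex_iff_probExt_nonneg (hd : 1 ≤ d) {y : Fin (d - 1) → ℝ} :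
    y ∈ cornerSimplex (d - 1) ↔ ∀ i, 0 ≤ probExt d y i := by
  constructor
  · rintro ⟨hy, hsum⟩ i
    unfold probExt
    split
    · exact hy _
    · linarith
  · intro h
    refine ⟨fun i => by simpa [probExt] using h ⟨i, by omega⟩, ?_⟩
    simpa [probExt] using h ⟨d - 1, by omega⟩

lemma probExt_mem_stdSimplex (hd : 1 ≤ d) {y : Fin (d - 1) → ℝ}
    (hy : y ∈ cornerSimplex (d - 1)) : probExt d y ∈ stdSimplex ℝ (Fin d) :=
  ⟨(mem_cornerSimplex_iff_probExt_nonneg hd).1 hy, sum_probExt hd y⟩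

lemma isOpen_setOf_probExt_pos : IsOpen {y : Fin (d - 1) → ℝ | ∀ i, 0 < probExt d y i} := by
  simp only [ofPred_forall]
  exact isOpen_iInter_of_finite fun i =>
    isOpen_lt continuous_const ((continuous_apply i).comp continuous_probExt)

lemma setOf_probExt_pos_subset_cornerSimplex (hd : 1 ≤ d) :
    {y : Fin (d - 1) → ℝ | ∀ i, 0 < probExt d y i} ⊆ cornerSimplex (d - 1) :=
  fun _ hy => (mem_cornerSimplex_iff_probExt_nonneg hd).2 fun i => (hy i).le

end ProbExt

section Multinomial

variable {d : ℕ}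

lemma continuous_multinomialProb (n : ℕ) (k : Fin d → ℕ) : Continuous (multinomialProb n k) :=
  continuous_const.mul (continuous_finsetProd _ fun i _ => (continuous_apply i).pow _)

lemma multinomialProb_nonneg (n : ℕ) (k : Fin d → ℕ) {p : Fin d → ℝ} (hp : ∀ i, 0 ≤ p i) :
    0 ≤ multinomialProb n k p :=
  mul_nonneg (by positivity) (prod_nonneg fun i _ => pow_nonneg (hp i) _)

lemma multinomialProb_pos (n : ℕ) (k : Fin d → ℕ) {p : Fin d → ℝ} (hp : ∀ i, 0 < p i) :
    0 < multinomialProb n k p :=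
  mul_pos (by positivity) (prod_pos fun i _ => pow_pos (hp i) _)

lemma setIntegral_multinomialProb_pos (hd : 1 ≤ d) {x : Fin (d - 1) → ℝ}
    (hx : ∀ i, 0 < probExt d x i) (n : ℕ) (k : Fin d → ℕ) :
    0 < ∫ y in cornerSimplex (d - 1), multinomialProb n k (probExt d y) :=
  setIntegral_pos_of_pos_on (isCompact_cornerSimplex _).isClosed.measurableSet
    (fun _ hy => multinomialProb_nonneg n k ((mem_cornerSimplex_iff_probExt_nonneg hd).1 hy))
    (((continuous_multinomialProb n k).comp continuous_probExt).continuousOn.integrableOn_compact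
      (isCompact_cornerSimplex _))
    (setOf_probExt_pos_subset_cornerSimplex hd)
    (isOpen_setOf_probExt_pos.measure_pos volume ⟨x, hx⟩).ne'
    fun _ hy => multinomialProb_pos n k hy

theorem exists_multinomialProb_probExt_le_pow_mul (hd : 1 ≤ d) {x : Fin (d - 1) → ℝ}
    (hx : ∀ i, 0 < probExt d x i) {k : ℕ → Fin d → ℕ}
    (hk : Tendsto (fun n i => (k n i : ℝ) / n) atTop (𝓝 (probExt d x)))
    {K : Set (Fin (d - 1) → ℝ)} (hK : IsCompact K) (hKΔ : K ⊆ cornerSimplex (d - 1))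
    (hxK : x ∉ K) :
    ∃ r, 0 ≤ r ∧ r < 1 ∧ ∃ O, IsOpen O ∧ x ∈ O ∧ O ⊆ cornerSimplex (d - 1) ∧
      ∀ᶠ n in atTop, ∀ y ∈ K, ∀ z ∈ O,
        multinomialProb n (k n) (probExt d y) ≤ r ^ n * multinomialProb n (k n) (probExt d z) := by
  obtain ⟨r, hr₀, hr₁, V, hV, hxV, hdom⟩ :=
    exists_prod_pow_le_pow_mul_prod_pow hx (sum_probExt hd x) hk (hK.image continuous_probExt)
      (image_subset_iff.2 fun y hy => probExt_mem_stdSimplex hd (hKΔ hy))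
      fun ⟨y, hy, hyx⟩ => hxK (probExt_injective hyx ▸ hy)
  have hOΔ : probExt d ⁻¹' V ∩ {y | ∀ i, 0 < probExt d y i} ⊆ cornerSimplex (d - 1) :=
    inter_subset_right.trans (setOf_probExt_pos_subset_cornerSimplex hd)
  refine ⟨r, hr₀, hr₁, _, (hV.preimage continuous_probExt).inter isOpen_setOf_probExt_pos,
    ⟨hxV, hx⟩, hOΔ, ?_⟩
  filter_upwards [hdom] with n hn y hy z hz
  have h := hn _ (mem_image_of_mem _ hy) _ ⟨hz.1, probExt_mem_stdSimplex hd (hOΔ hz)⟩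
  simp only [multinomialProb]
  rw [mul_left_comm]
  exact mul_le_mul_of_nonneg_left h (by positivity)

theorem tendsto_setIntegral_multinomialProb_mul_div (hd : 1 ≤ d) {x : Fin (d - 1) → ℝ}
    (hx : ∀ i, 0 < probExt d x i) {k : ℕ → Fin d → ℕ}
    (hk : Tendsto (fun n i => (k n i : ℝ) / n) atTop (𝓝 (probExt d x)))
    {H : (Fin (d - 1) → ℝ) → ℝ} (hH : ContinuousOn H (cornerSimplex (d - 1))) :
    Tendsto (fun n =>
      (∫ y in cornerSimplex (d - 1), multinomialProb n (k n) (probExt d y) * H y) /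
        ∫ y in cornerSimplex (d - 1), multinomialProb n (k n) (probExt d y))
      atTop (𝓝 (H x)) := by
  have hΔ := isCompact_cornerSimplex (d - 1)
  have hΔm := hΔ.isClosed.measurableSet
  have hxΔ : x ∈ cornerSimplex (d - 1) := setOf_probExt_pos_subset_cornerSimplex hd hx
  have hPc : ∀ n, Continuous fun y => multinomialProb n (k n) (probExt d y) := fun n =>
    (continuous_multinomialProb n (k n)).comp continuous_probExt
  have hP : ∀ n, ∀ y ∈ cornerSimplex (d - 1), 0 ≤ multinomialProb n (k n) (probExt d y) :=
    fun n y hy => multinomialProb_nonneg n (k n) ((mem_cornerSimplex_iff_probExt_nonneg hd).1 hy)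
  have hPi := fun n => (hPc n).continuousOn.integrableOn_compact (μ := volume) hΔ
  obtain ⟨C, hC⟩ := hΔ.exists_bound_of_continuousOn hH
  have hM : ∀ y ∈ cornerSimplex (d - 1), |H y - H x| ≤ C + C := fun y hy =>
    (abs_sub _ _).trans (add_le_add (hC y hy) (hC x hxΔ))
  refine tendsto_setIntegral_mul_div_setIntegral hΔm hP hPi
    (fun n => ((hPc n).continuousOn.mul hH).integrableOn_compact hΔ) (hH x hxΔ) hM
    (Eventually.of_forall (setIntegral_multinomialProb_pos hd hx · _)) fun U hU hxU => ?_
  obtain ⟨r, hr₀, hr₁, O, hO, hxO, hOΔ, hdom⟩ :=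
    exists_multinomialProb_probExt_le_pow_mul hd hx hk (hΔ.diff hU) sdiff_subset
      fun h => h.2 hxU
  exact tendsto_setIntegral_div_setIntegral_of_le_pow_mul hΔm (hΔm.diff hU.measurableSet)
    hO.measurableSet sdiff_subset hOΔ (hΔ.diff hU).measure_lt_top.ne
    (hO.measure_pos volume ⟨x, hxO⟩).ne' ((measure_mono hOΔ).trans_lt hΔ.measure_lt_top).ne
    hP hPi hr₀ hr₁ hdom

end Multinomial

theorem multinomial_mixture_ratio_tendsto_general
    (d : ℕ) (hd : 2 ≤ d)
    (Δ : Set (Fin (d - 1) → ℝ))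
    (hΔ : Δ = {y | (∀ i, 0 ≤ y i) ∧ ∑ i, y i ≤ 1})
    (x : Fin (d - 1) → ℝ) (hxΔ : x ∈ Δ)
    (hxpos : ∀ i : Fin d, 0 < probExt d x i)
    (k : ℕ → Fin d → ℕ)
    (hfreq : ∀ i : Fin d,
      Tendsto (fun n : ℕ => (k n i : ℝ) / n) atTop (nhds (probExt d x i)))
    (F G : (Fin (d - 1) → ℝ) → ℝ)
    (hF : ContinuousOn F Δ) (hG : ContinuousOn G Δ)
    (hGpos : ∀ y ∈ Δ, 0 < G y) :
    Tendsto
      (fun n : ℕ =>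
        (∫ y in Δ, multinomialProb n (k n) (probExt d y) * F y) /
        (∫ y in Δ, multinomialProb n (k n) (probExt d y) * G y))
      atTop (nhds (F x / G x)) := by
  subst hΔ
  have hd₁ : 1 ≤ d := by omega
  have hk := tendsto_pi_nhds.2 hfreq
  refine ((tendsto_setIntegral_multinomialProb_mul_div hd₁ hxpos hk hF).div
    (tendsto_setIntegral_multinomialProb_mul_div hd₁ hxpos hk hG) (hGpos x hxΔ).ne').congr
    fun n => div_div_div_cancel_right₀ (setIntegral_multinomialProb_pos hd₁ hxpos n (k n)).ne' _ _

/-- Localisation of multinomial mixtures: if `k⁽ⁿ⁾/n → x` with `x` in the interior of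
the simplex `Δ`, then for continuous `F ≥ 0` and `G > 0` on `Δ`,
`(∫_Δ q(k⁽ⁿ⁾; y) F(y) dy) / (∫_Δ q(k⁽ⁿ⁾; y) G(y) dy) → F(x) / G(x)`. -/
theorem multinomial_mixture_ratio_tendsto
    (d : ℕ) (hd : 2 ≤ d)
    (Δ : Set (Fin (d - 1) → ℝ))
    (hΔ : Δ = {y | (∀ i, 0 ≤ y i) ∧ ∑ i, y i ≤ 1})
    (x : Fin (d - 1) → ℝ) (hxΔ : x ∈ Δ)
    (hxpos : ∀ i : Fin d, 0 < probExt d x i)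
    (k : ℕ → Fin d → ℕ) (hk : ∀ n, ∑ i, k n i = n)
    (hfreq : ∀ i : Fin d,
      Tendsto (fun n : ℕ => (k n i : ℝ) / n) atTop (nhds (probExt d x i)))
    (F G : (Fin (d - 1) → ℝ) → ℝ)
    (hF : ContinuousOn F Δ) (hG : ContinuousOn G Δ)
    (hFnn : ∀ y ∈ Δ, 0 ≤ F y) (hGpos : ∀ y ∈ Δ, 0 < G y) :
    Tendsto
      (fun n : ℕ =>
        (∫ y in Δ, multinomialProb n (k n) (probExt d y) * F y) /
        (∫ y in Δ, multinomialProb n (k n) (probExt d y) * G y))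
      atTop (nhds (F x / G x)) :=
  multinomial_mixture_ratio_tendsto_general d hd Δ hΔ x hxΔ hxpos k hfreq F G hF hG hGpos
end

section
/- Let β : [0,1] → ℝ be a measurable probability density (β ≥ 0 and ∫₀¹ β(r) dr = 1) and let ε > 0. Then there exist η ∈ (0,1) and a measurable function φ : [η, 1] → ℝ with ∫_η^1 φ(r) dr = 1, inf_{r∈[η,1]} φ(r) > 0 and sup_{r∈[η,1]} φ(r) < ∞, such that for every integer k ≥ 1, | ∫₀¹ r^k β(r) dr − ∫_η^1 r^k φ(r) dr | < ε. In other words, every moment sequence of an absolutely continuous probability measure on [0,1] can be uniformly approximated by the moment sequence of a probability density on [η,1] bounded above and bounded away from zero. -/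
/-!
Clip `β` at a height `M` so that `∫ |β - min β M|` is small, drop it on `[0, η)`, where this
costs at most `M η`, and lift it by a constant `δ` to bound it away from zero. The result is
`L¹`-close to `β`, and so is its normalization: normalizing at most doubles the `L¹` error,
because the defect of mass is itself bounded by that error. Since `|r ^ k| ≤ 1` on `[0, 1]`,
moments differ by at most the `L¹` distance, uniformly in `k`.
-/

open MeasureTheory Set Filter Topology

section

variable {α : Type*} [MeasurableSpace α] {μ : Measure α}

theorem tendsto_integral_abs_sub_min_atTop {f : α → ℝ} (hf : Integrable f μ) :
    Tendsto (fun A : ℝ => ∫ x, |f x - min (f x) A| ∂μ) atTop (𝓝 0) := by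
  have hlim := tendsto_integral_filter_of_dominated_convergence (μ := μ)
    (F := fun (A : ℝ) x => |f x - min (f x) A|) (f := fun _ => 0) (fun x => |f x|)
    (Eventually.of_forall fun A =>
      (hf.aestronglyMeasurable.sub (hf.aestronglyMeasurable.inf aestronglyMeasurable_const)).norm)
    (by
      filter_upwards [eventually_ge_atTop 0] with A hA
      refine Eventually.of_forall fun x => ?_
      rw [Real.norm_eq_abs, abs_abs]
      rcases le_total (f x) A with h | h
      · simp [min_eq_left h]
      · rw [min_eq_right h, abs_of_nonneg (sub_nonneg.2 h)]
        exact (sub_le_self _ hA).trans (le_abs_self _))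
    hf.abs
    (Eventually.of_forall fun x => tendsto_const_nhds.congr' <| by
      filter_upwards [eventually_ge_atTop (f x)] with A hA
      simp [min_eq_left hA])
  simpa using hlim

theorem abs_integral_mul_sub_integral_mul_le {w f g : α → ℝ} (hw : AEStronglyMeasurable w μ)
    (hw1 : ∀ᵐ x ∂μ, |w x| ≤ 1) (hf : Integrable f μ) (hg : Integrable g μ) :
    |∫ x, w x * f x ∂μ - ∫ x, w x * g x ∂μ| ≤ ∫ x, |f x - g x| ∂μ := by
  rw [← integral_sub (hf.bdd_mul hw hw1) (hg.bdd_mul hw hw1), ← Real.norm_eq_abs]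
  refine norm_integral_le_of_norm_le (hf.sub hg).abs ?_
  filter_upwards [hw1] with x hx
  rw [← mul_sub, Real.norm_eq_abs, abs_mul]
  exact mul_le_of_le_one_left (abs_nonneg _) hx

theorem integral_abs_sub_div_integral_le {f g : α → ℝ} (hf : Integrable f μ)
    (hf1 : ∫ x, f x ∂μ = 1) (hg : Integrable g μ) (hg0 : 0 ≤ᵐ[μ] g) :
    ∫ x, |f x - g x / ∫ y, g y ∂μ| ∂μ ≤ 2 * ∫ x, |f x - g x| ∂μ := by
  set I := ∫ y, g y ∂μ
  have hI : 0 ≤ I := integral_nonneg_of_ae hg0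
  have hscale : ∫ x, |g x - g x / I| ∂μ = I * |1 - I⁻¹| := by
    rw [← integral_mul_const]
    refine integral_congr_ae ?_
    filter_upwards [hg0] with x hx
    rw [div_eq_mul_inv, ← mul_one_sub, abs_mul, abs_of_nonneg hx]
  have hmass : I * |1 - I⁻¹| ≤ ∫ x, |f x - g x| ∂μ := by
    rcases hI.eq_or_lt with hI0 | hIpos
    · rw [← hI0, zero_mul]
      exact integral_nonneg fun x => abs_nonneg _
    · calc I * |1 - I⁻¹| = |∫ x, f x ∂μ - ∫ x, g x ∂μ| := by
            rw [hf1, ← abs_of_pos hIpos, ← abs_mul, abs_of_pos hIpos, mul_one_sub,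
              mul_inv_cancel₀ hIpos.ne', abs_sub_comm]
        _ ≤ ∫ x, |f x - g x| ∂μ := by
            rw [← integral_sub hf hg]
            exact abs_integral_le_integral_abs
  have hfg : Integrable (fun x => |f x - g x|) μ := (hf.sub hg).abs
  have hgI : Integrable (fun x => |g x - g x / I|) μ := (hg.sub (hg.div_const I)).abs
  calc ∫ x, |f x - g x / I| ∂μ
      ≤ ∫ x, (|f x - g x| + |g x - g x / I|) ∂μ :=
        integral_mono (hf.sub (hg.div_const I)).abs (hfg.add hgI) fun x => abs_sub_le _ _ _
    _ ≤ 2 * ∫ x, |f x - g x| ∂μ := by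
        rw [integral_add hfg hgI, hscale]
        linarith

theorem setIntegral_indicator_of_subset {s t : Set α} (hst : s ⊆ t) (hs : MeasurableSet s)
    (g : α → ℝ) : ∫ x in t, s.indicator g x ∂μ = ∫ x in s, g x ∂μ := by
  rw [setIntegral_indicator hs, inter_eq_right.2 hst]

end

theorem abs_moment_sub_moment_le {η : ℝ} (hη : 0 ≤ η) {f g : ℝ → ℝ}
    (hf : IntegrableOn f (Icc 0 1)) (hg : IntegrableOn g (Icc η 1)) (k : ℕ) :
    |(∫ r in Icc (0:ℝ) 1, r ^ k * f r) - ∫ r in Icc η 1, r ^ k * g r|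
      ≤ ∫ r in Icc (0:ℝ) 1, |f r - (Icc η 1).indicator g r| := by
  rw [← setIntegral_indicator_of_subset (Icc_subset_Icc hη le_rfl) measurableSet_Icc]
  simp_rw [indicator_mul_right]
  refine abs_integral_mul_sub_integral_mul_le (continuous_pow k).aestronglyMeasurable ?_ hf
    (hg.integrable_indicator measurableSet_Icc).integrableOn
  refine (ae_restrict_iff' measurableSet_Icc).2 (Eventually.of_forall fun r hr => ?_)
  rw [abs_of_nonneg (pow_nonneg hr.1 k)]
  exact pow_le_one₀ hr.1 hr.2

theorem exists_integral_abs_sub_indicator_min_add_lt {β : ℝ → ℝ}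
    (hβnn : ∀ r ∈ Icc (0:ℝ) 1, 0 ≤ β r) (hβi : IntegrableOn β (Icc 0 1)) {δ : ℝ} (hδ : 0 < δ) :
    ∃ η ∈ Ioo (0:ℝ) 1, ∃ M : ℝ, 0 ≤ M ∧
      ∫ r in Icc (0:ℝ) 1, |β r - (Icc η 1).indicator (fun r => min (β r) M + δ) r| < 3 * δ := by
  obtain ⟨M, hMδ, hM⟩ :=
    (((tendsto_integral_abs_sub_min_atTop hβi).eventually (gt_mem_nhds hδ)).and
      (eventually_ge_atTop 0)).exists
  have hMη : Tendsto (fun η : ℝ => M * η) (𝓝[>] 0) (𝓝 0) := by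
    simpa using ((tendsto_id (x := 𝓝 (0:ℝ))).const_mul M).mono_left nhdsWithin_le_nhds
  obtain ⟨η, hηδ, hη⟩ := ((hMη.eventually (gt_mem_nhds hδ)).and (Ioo_mem_nhdsGT one_pos)).exists
  refine ⟨η, hη, M, hM, ?_⟩
  have hbound : ∀ r ∈ Icc (0:ℝ) 1, |β r - (Icc η 1).indicator (fun r => min (β r) M + δ) r|
      ≤ |β r - min (β r) M| + (Icc 0 η).indicator (fun _ => M) r + δ := by
    intro r hr
    by_cases hrη : r ∈ Icc η 1
    · have hM0 : 0 ≤ (Icc 0 η).indicator (fun _ => M) r := indicator_nonneg (fun _ _ => hM) r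
      rw [indicator_of_mem hrη, ← sub_sub]
      linarith [abs_sub (β r - min (β r) M) δ, abs_of_pos hδ]
    · have hr0η : r ∈ Icc 0 η := ⟨hr.1, le_of_lt (not_le.1 fun h => hrη ⟨h, hr.2⟩)⟩
      rw [indicator_of_notMem hrη, indicator_of_mem hr0η, sub_zero, abs_of_nonneg (hβnn r hr)]
      linarith [le_abs_self (β r - min (β r) M), min_le_right (β r) M]
  have hsub : Icc 0 η ⊆ Icc (0:ℝ) 1 := Icc_subset_Icc le_rfl hη.2.le
  have hmin : IntegrableOn (fun r => |β r - min (β r) M|) (Icc 0 1) :=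
    (hβi.sub (hβi.inf (integrable_const M))).abs
  have hind : IntegrableOn ((Icc 0 η).indicator fun _ => M) (Icc 0 1) :=
    ((integrableOn_const (C := M) measure_Icc_lt_top.ne).integrable_indicator
      measurableSet_Icc).integrableOn
  have hsum : IntegrableOn (fun r => |β r - min (β r) M| + (Icc 0 η).indicator (fun _ => M) r)
      (Icc 0 1) :=
    hmin.add hind
  calc ∫ r in Icc (0:ℝ) 1, |β r - (Icc η 1).indicator (fun r => min (β r) M + δ) r|
      ≤ ∫ r in Icc (0:ℝ) 1, (|β r - min (β r) M| + (Icc 0 η).indicator (fun _ => M) r + δ) :=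
        integral_mono_of_nonneg (Eventually.of_forall fun r => abs_nonneg _)
          (hsum.add (integrable_const δ))
          ((ae_restrict_iff' measurableSet_Icc).2 (Eventually.of_forall hbound))
    _ = (∫ r in Icc (0:ℝ) 1, |β r - min (β r) M|) + M * η + δ := by
        rw [integral_add hsum (integrable_const δ), integral_add hmin hind,
          setIntegral_indicator_of_subset hsub measurableSet_Icc, setIntegral_const,
          setIntegral_const, Real.volume_real_Icc_of_le hη.1.le,
          Real.volume_real_Icc_of_le zero_le_one]
        simp [mul_comm]
    _ < 3 * δ := by linarith

theorem exists_bounded_density_on_Icc_close {β : ℝ → ℝ} (hβm : Measurable β)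
    (hβnn : ∀ r ∈ Icc (0:ℝ) 1, 0 ≤ β r) (hβint : ∫ r in Icc (0:ℝ) 1, β r = 1)
    {ε : ℝ} (hε : 0 < ε) :
    ∃ η ∈ Ioo (0:ℝ) 1, ∃ φ : ℝ → ℝ, Measurable φ ∧ IntegrableOn φ (Icc η 1) ∧
      (∫ r in Icc η 1, φ r = 1) ∧ (∃ a : ℝ, 0 < a ∧ ∀ r ∈ Icc η 1, a ≤ φ r) ∧
      (∃ b : ℝ, ∀ r ∈ Icc η 1, φ r ≤ b) ∧
      ∫ r in Icc (0:ℝ) 1, |β r - (Icc η 1).indicator φ r| < ε := by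
  have hβi : IntegrableOn β (Icc 0 1) := Integrable.of_integral_ne_zero (by simp [hβint])
  have hδ : 0 < ε / 6 := by positivity
  obtain ⟨η, hη, M, hM, hclose⟩ := exists_integral_abs_sub_indicator_min_add_lt hβnn hβi hδ
  have hsub : Icc η 1 ⊆ Icc 0 1 := Icc_subset_Icc hη.1.le le_rfl
  set ψ : ℝ → ℝ := fun r => min (β r) M + ε / 6
  have hψ_lb : ∀ r ∈ Icc η 1, ε / 6 ≤ ψ r := fun r hr =>
    le_add_of_nonneg_left (le_min (hβnn r (hsub hr)) hM)
  have hψ_ub : ∀ r, ψ r ≤ M + ε / 6 := fun r => by simp only [ψ]; linarith [min_le_right (β r) M]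
  have hψi : IntegrableOn ψ (Icc η 1) :=
    ((hβi.mono_set hsub).inf (integrable_const M)).add (integrable_const _)
  set I := ∫ r in Icc η 1, ψ r
  have hI : 0 < I := by
    refine lt_of_lt_of_le ?_ (setIntegral_ge_of_const_le_real measurableSet_Icc
      measure_Icc_lt_top.ne hψ_lb hψi)
    rw [Real.volume_real_Icc_of_le hη.2.le]
    exact mul_pos hδ (sub_pos.2 hη.2)
  refine ⟨η, hη, fun r => ψ r / I, by fun_prop, hψi.div_const I,
    by rw [integral_div, div_self hI.ne'],
    ⟨ε / 6 / I, by positivity, fun r hr => div_le_div_of_nonneg_right (hψ_lb r hr) hI.le⟩,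
    ⟨(M + ε / 6) / I, fun r _ => div_le_div_of_nonneg_right (hψ_ub r) hI.le⟩, ?_⟩
  have hnorm := integral_abs_sub_div_integral_le hβi hβint
    (hψi.integrable_indicator measurableSet_Icc).integrableOn
    (Eventually.of_forall fun r => indicator_nonneg (fun r hr => hδ.le.trans (hψ_lb r hr)) r)
  rw [setIntegral_indicator_of_subset hsub measurableSet_Icc] at hnorm
  calc _ = ∫ r in Icc (0:ℝ) 1, |β r - (Icc η 1).indicator ψ r / I| := by
        simp only [indicator_apply, apply_ite (· / I), zero_div]
    _ ≤ 2 * ∫ r in Icc (0:ℝ) 1, |β r - (Icc η 1).indicator ψ r| := hnorm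
    _ < ε := by linarith

/-- Every moment sequence of an absolutely continuous probability measure on `[0,1]` can
be uniformly approximated by the moment sequence of a probability density on `[η,1]`
bounded above and bounded away from zero. -/
theorem moments_approx_by_bounded_density
    (β : ℝ → ℝ) (hβm : Measurable β) (hβnn : ∀ r ∈ Set.Icc (0:ℝ) 1, 0 ≤ β r)
    (hβint : ∫ r in Set.Icc (0:ℝ) 1, β r = 1)
    (ε : ℝ) (hε : 0 < ε) :
    ∃ η : ℝ, η ∈ Set.Ioo (0:ℝ) 1 ∧
      ∃ φ : ℝ → ℝ, Measurable φ ∧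
        (∫ r in Set.Icc η 1, φ r = 1) ∧
        (∃ a : ℝ, 0 < a ∧ ∀ r ∈ Set.Icc η 1, a ≤ φ r) ∧
        (∃ b : ℝ, ∀ r ∈ Set.Icc η 1, φ r ≤ b) ∧
        ∀ k : ℕ, 1 ≤ k →
          |(∫ r in Set.Icc (0:ℝ) 1, r ^ k * β r) - ∫ r in Set.Icc η 1, r ^ k * φ r| < ε := by
  obtain ⟨η, hη, φ, hφm, hφi, hφ1, hφ_lb, hφ_ub, hclose⟩ :=
    exists_bounded_density_on_Icc_close hβm hβnn hβint hε
  have hβi : IntegrableOn β (Icc 0 1) := Integrable.of_integral_ne_zero (by simp [hβint])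
  exact ⟨η, hη, φ, hφm, hφ1, hφ_lb, hφ_ub, fun k _ =>
    (abs_moment_sub_moment_le hη.1.le hβi hφi k).trans_lt hclose⟩
end
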